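/- arXiv:2307.06873 — 10 statements merged into one kernel-verified Lean document; each statement's English description precedes it below -/
import Mathlib

section
/- Let V, W be finite-dimensional normed spaces, f: V → ℝ convex, A: V → W linear, K ⊆ V a closed convex cone, b = A(x♮) with x♮ ∈ K. Define F_{r,ℓ}(x) = f(x) + r‖A(x) - b‖ + ℓ·dist(x,K). Then F_{r,ℓ} is μ-sharp around x♮ if and only if B_{V*}(0,μ) ⊆ ∂f(x♮) − A*(B_{W*}(0,r)) − (K* ∩ (x♮)^⊥ ∩ B_{V*}(0,ℓ)). -/
open Pointwise

/-!
Both sides describe the subdifferential `∂F(x₀)` of the penalized function. Testing `F` against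
a norming functional of `x - x₀` shows that `μ`-sharpness is exactly `B(0, μ) ⊆ ∂F(x₀)`.
A convex function on a finite-dimensional space is continuous, so the sum rule
`∂(φ + ψ)(x₀) = ∂φ(x₀) + ∂ψ(x₀)` applies; it comes from the sandwich theorem, i.e. from separating
the strict epigraph of a continuous convex function from the hypograph of a concave one below it.
At a feasible point the subdifferentials of the two penalties are computed by hand: a functional
bounded by `r‖A ·‖` factors through `A` with norm at most `r` (Hahn–Banach on the range of `A`),
and one bounded by `ℓ dist(·, K)` is nonpositive on the cone and vanishes at `x₀`.
-/

open Set Metric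

section

variable {V W : Type*} [NormedAddCommGroup V] [NormedSpace ℝ V]
  [NormedAddCommGroup W] [NormedSpace ℝ W]

theorem exists_affine_between_of_concaveOn_le_convexOn {f g : V → ℝ}
    (hf : ConvexOn ℝ univ f) (hfc : Continuous f) (hg : ConcaveOn ℝ univ g)
    (hgf : ∀ x, g x ≤ f x) :
    ∃ (q : V →L[ℝ] ℝ) (c : ℝ), ∀ x, g x ≤ q x + c ∧ q x + c ≤ f x := by
  have hopen : IsOpen {p : V × ℝ | p.1 ∈ univ ∧ f p.1 < p.2} := by
    simpa only [mem_univ, true_and] using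
      isOpen_lt (by fun_prop : Continuous fun p : V × ℝ => f p.1) continuous_snd
  have hdisj : Disjoint {p : V × ℝ | p.1 ∈ univ ∧ f p.1 < p.2}
      {p | p.1 ∈ univ ∧ p.2 ≤ g p.1} :=
    disjoint_left.2 fun p hS hT => (hS.2.trans_le' (hT.2.trans (hgf p.1))).false
  obtain ⟨F, u, hS, hT⟩ :=
    geometric_hahn_banach_open hf.convex_strict_epigraph hopen hg.convex_hypograph hdisj
  set p := F.comp (ContinuousLinearMap.inl ℝ V ℝ)
  set s := F (0, 1)
  have hF : ∀ x t, F (x, t) = p x + t * s := fun x t => by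
    rw [show (x, t) = (x, 0) + t • ((0 : V), (1 : ℝ)) by simp, map_add, map_smul, smul_eq_mul,
      mul_comm]
    rfl
  have hS' : ∀ x t, f x < t → p x + t * s < u := fun x t ht =>
    hF x t ▸ hS (x, t) ⟨mem_univ _, ht⟩
  have hT' : ∀ x, u ≤ p x + g x * s := fun x => hF x _ ▸ hT (x, g x) ⟨mem_univ _, le_rfl⟩
  -- the separating hyperplane is not vertical: compare `(0, f 0 + 1)` with `(0, g 0)`
  have hs : s < 0 := by
    nlinarith [hS' 0 (f 0 + 1) (lt_add_one _), hT' 0, hgf 0]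
  have hqc : ∀ x, (-s⁻¹ • p) x + u / s = (u - p x) / s := fun x => by
    simp only [smul_apply, smul_eq_mul]
    ring
  refine ⟨-s⁻¹ • p, u / s, fun x => ⟨?_, le_of_forall_gt_imp_ge_of_dense fun t ht => ?_⟩⟩
  · rw [hqc, le_div_iff_of_neg hs]
    linarith [hT' x]
  · rw [hqc, div_le_iff_of_neg hs]
    linarith [hS' x t ht]

def subdifferential (f : V → ℝ) (x₀ : V) : Set (V →L[ℝ] ℝ) :=
  {g | ∀ x, f x₀ + g (x - x₀) ≤ f x}

theorem add_subdifferential_subset (f g : V → ℝ) (x₀ : V) :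
    subdifferential f x₀ + subdifferential g x₀ ⊆ subdifferential (fun x => f x + g x) x₀ := by
  rintro _ ⟨p, hp, q, hq, rfl⟩ x
  simp only [add_apply]
  linarith [hp x, hq x]

theorem subdifferential_add_subset {f g : V → ℝ} (hf : ConvexOn ℝ univ f) (hfc : Continuous f)
    (hg : ConvexOn ℝ univ g) (x₀ : V) :
    subdifferential (fun x => f x + g x) x₀ ⊆ subdifferential f x₀ + subdifferential g x₀ := by
  intro q hq
  replace hq : ∀ x, f x₀ + g x₀ + (q x - q x₀) ≤ f x + g x := fun x => by
    simpa only [map_sub] using hq x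
  obtain ⟨q', c, hq'⟩ := exists_affine_between_of_concaveOn_le_convexOn
    (hf.sub (q.toLinearMap.concaveOn convex_univ)) (hfc.sub q.continuous)
    ((neg_concaveOn_iff.2 hg).add_const (f x₀ + g x₀ - q x₀))
    fun x => by
      simp only [Pi.add_apply, Pi.neg_apply, Pi.sub_apply, ContinuousLinearMap.coe_coe]
      linarith [hq x]
  simp only [Pi.add_apply, Pi.neg_apply, Pi.sub_apply, ContinuousLinearMap.coe_coe] at hq'
  have hc : q' x₀ + c = f x₀ - q x₀ := by linarith [hq' x₀]
  refine ⟨q + q', fun x => ?_, -q', fun x => ?_, add_neg_cancel_right q q'⟩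
  · simp only [add_apply, map_sub]
    linarith [(hq' x).2]
  · simp only [neg_apply, map_sub]
    linarith [(hq' x).1]

theorem subdifferential_add {f g : V → ℝ} (hf : ConvexOn ℝ univ f) (hfc : Continuous f)
    (hg : ConvexOn ℝ univ g) (x₀ : V) :
    subdifferential (fun x => f x + g x) x₀ = subdifferential f x₀ + subdifferential g x₀ :=
  (subdifferential_add_subset hf hfc hg x₀).antisymm (add_subdifferential_subset f g x₀)

theorem forall_sub_ge_mul_norm_iff_closedBall_subset_subdifferential {F : V → ℝ} {x₀ : V}
    {μ : ℝ} (hμ : 0 ≤ μ) :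
    (∀ x, F x - F x₀ ≥ μ * ‖x - x₀‖) ↔ closedBall (0 : V →L[ℝ] ℝ) μ ⊆ subdifferential F x₀ := by
  refine ⟨fun hF g hg x => ?_, fun hF x => ?_⟩
  · have := (le_abs_self _).trans ((g.le_opNorm (x - x₀)).trans
      (mul_le_mul_of_nonneg_right (mem_closedBall_zero_iff.1 hg) (norm_nonneg _)))
    linarith [hF x]
  · obtain ⟨g, hg, hgx⟩ := exists_dual_vector'' ℝ (x - x₀)
    have hμg : μ • g ∈ closedBall (0 : V →L[ℝ] ℝ) μ := by
      rw [mem_closedBall_zero_iff, norm_smul, Real.norm_of_nonneg hμ]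
      exact mul_le_of_le_one_right hμ hg
    have := hF hμg x
    rw [smul_apply, hgx, smul_eq_mul, RCLike.ofReal_real_eq_id, id] at this
    linarith

theorem ContinuousLinearMap.abs_apply_le_of_le {q : V →L[ℝ] ℝ} {N : V → ℝ}
    (hN : ∀ v, N (-v) = N v) (hq : ∀ v, q v ≤ N v) (v : V) : |q v| ≤ N v :=
  abs_le.2 ⟨by linarith [map_neg q v ▸ hN v ▸ hq (-v)], hq v⟩

theorem exists_comp_eq_of_le_mul_norm (A : V →L[ℝ] W) {q : V →L[ℝ] ℝ} {r : ℝ} (hr : 0 ≤ r)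
    (hq : ∀ v, q v ≤ r * ‖A v‖) : ∃ y : W →L[ℝ] ℝ, ‖y‖ ≤ r ∧ y.comp A = q := by
  have habs := q.abs_apply_le_of_le (fun v => by rw [map_neg, norm_neg]) hq
  have hker : LinearMap.ker (A : V →ₗ[ℝ] W) ≤ LinearMap.ker (q : V →ₗ[ℝ] ℝ) := fun v hv => by
    have hAv : A v = 0 := hv
    simpa [hAv] using habs v
  let y₀ : LinearMap.range (A : V →ₗ[ℝ] W) →ₗ[ℝ] ℝ :=
    (LinearMap.ker _).liftQ (q : V →ₗ[ℝ] ℝ) hker ∘ₗ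
      (A : V →ₗ[ℝ] W).quotKerEquivRange.symm.toLinearMap
  have hy₀ : ∀ v, y₀ ⟨A v, LinearMap.mem_range_self (A : V →ₗ[ℝ] W) v⟩ = q v := fun v =>
    congrArg ((LinearMap.ker _).liftQ (q : V →ₗ[ℝ] ℝ) hker)
      (LinearMap.quotKerEquivRange_symm_apply_image (A : V →ₗ[ℝ] W) v _)
  have hy₀_le : ∀ u, ‖y₀ u‖ ≤ r * ‖u‖ := by
    rintro ⟨_, v, rfl⟩
    exact (hy₀ v).symm ▸ habs v
  obtain ⟨y, hy, hnorm⟩ := exists_extension_norm_eq _ (y₀.mkContinuous r hy₀_le)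
  refine ⟨y, hnorm ▸ LinearMap.mkContinuous_norm_le _ hr _, ContinuousLinearMap.ext fun v => ?_⟩
  exact (hy ⟨A v, LinearMap.mem_range_self (A : V →ₗ[ℝ] W) v⟩).trans (hy₀ v)

theorem convexOn_infDist {K : Set V} (hK : Convex ℝ K) : ConvexOn ℝ univ fun x => infDist x K := by
  rcases K.eq_empty_or_nonempty with rfl | hne
  · simpa only [infDist_empty] using convexOn_const (0 : ℝ) convex_univ
  refine ⟨convex_univ, fun x _ y _ a b ha hb hab => ?_⟩
  simp only [smul_eq_mul]
  refine le_of_forall_pos_le_add fun ε hε => ?_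
  obtain ⟨k, hk, hxk⟩ := (infDist_lt_iff hne).1 (lt_add_of_pos_right (infDist x K) hε)
  obtain ⟨l, hl, hyl⟩ := (infDist_lt_iff hne).1 (lt_add_of_pos_right (infDist y K) hε)
  calc infDist (a • x + b • y) K
      ≤ dist (a • x + b • y) (a • k + b • l) := infDist_le_dist_of_mem (hK hk hl ha hb hab)
    _ ≤ a * dist x k + b * dist y l := by
      refine (dist_add_add_le _ _ _ _).trans_eq ?_
      rw [dist_smul₀, dist_smul₀, Real.norm_of_nonneg ha, Real.norm_of_nonneg hb]
    _ ≤ a * (infDist x K + ε) + b * (infDist y K + ε) := by gcongr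
    _ = a * infDist x K + b * infDist y K + ε := by linear_combination ε * hab

theorem convexOn_norm_sub (A : V →L[ℝ] W) (b : W) : ConvexOn ℝ univ fun x => ‖A x - b‖ := by
  simpa [dist_eq_norm, Function.comp_def] using
    (convexOn_univ_dist b).comp_linearMap (A : V →ₗ[ℝ] W)

theorem subdifferential_mul_norm_sub (A : V →L[ℝ] W) (x₀ : V) {r : ℝ} (hr : 0 ≤ r) :
    subdifferential (fun x => r * ‖A x - A x₀‖) x₀ =
      -((fun y : W →L[ℝ] ℝ => y.comp A) '' closedBall 0 r) := by
  ext q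
  simp only [subdifferential, mem_neg, sub_self, norm_zero, mul_zero, zero_add]
  constructor
  · intro hq
    have hq' : ∀ v, (-q) v ≤ r * ‖A v‖ := fun v => by
      simpa [← map_sub, norm_neg] using hq (x₀ - v)
    obtain ⟨y, hy, hyq⟩ := exists_comp_eq_of_le_mul_norm A hr hq'
    exact ⟨y, mem_closedBall_zero_iff.2 hy, hyq⟩
  · rintro ⟨y, hy, hyq⟩ x
    have hyv : y (A (x - x₀)) = -q (x - x₀) := DFunLike.congr_fun hyq _
    have hbound := y.le_of_opNorm_le (mem_closedBall_zero_iff.1 hy) (A (x - x₀))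
    rw [Real.norm_eq_abs, hyv, abs_neg, map_sub A] at hbound
    exact (le_abs_self _).trans hbound

theorem neg_mem_of_mem_subdifferential_mul_infDist {K : Set V}
    (hK : ∀ c : ℝ, 0 ≤ c → ∀ x ∈ K, c • x ∈ K) {x₀ : V} (hx₀ : x₀ ∈ K) {ℓ : ℝ} (hℓ : 0 ≤ ℓ)
    {q : V →L[ℝ] ℝ} (hq : q ∈ subdifferential (fun x => ℓ * infDist x K) x₀) :
    -q ∈ {z : V →L[ℝ] ℝ | (∀ v ∈ K, 0 ≤ z v) ∧ z x₀ = 0 ∧ ‖z‖ ≤ ℓ} := by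
  replace hq : ∀ x, q (x - x₀) ≤ ℓ * infDist x K := fun x => by
    simpa [infDist_zero_of_mem hx₀] using hq x
  have hK_le : ∀ v ∈ K, q (v - x₀) ≤ 0 := fun v hv => by
    simpa [infDist_zero_of_mem hv] using hq v
  have hqx₀ : q x₀ = 0 := by
    have h0 := hK_le _ (hK 0 le_rfl x₀ hx₀)
    have h2 := hK_le _ (hK 2 zero_le_two x₀ hx₀)
    rw [zero_smul, zero_sub, map_neg] at h0
    rw [two_smul, add_sub_cancel_right] at h2
    linarith
  have hq_le : ∀ w, q w ≤ ℓ * ‖w‖ := fun w => by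
    have hdist : infDist (x₀ + w) K ≤ ‖w‖ := by
      simpa using infDist_le_dist_of_mem (x := x₀ + w) hx₀
    simpa using (hq (x₀ + w)).trans (mul_le_mul_of_nonneg_left hdist hℓ)
  refine ⟨fun v hv => ?_, by simp [hqx₀], ?_⟩
  · simpa [hqx₀] using hK_le v hv
  · rw [norm_neg]
    exact q.opNorm_le_bound hℓ fun w => q.abs_apply_le_of_le (by simp) hq_le w

theorem neg_apply_le_mul_infDist {K : Set V} {ℓ : ℝ} (hℓ : 0 ≤ ℓ) (hK : K.Nonempty)
    {z : V →L[ℝ] ℝ} (hz : ∀ v ∈ K, 0 ≤ z v) (hzℓ : ‖z‖ ≤ ℓ) (x : V) :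
    -z x ≤ ℓ * infDist x K := by
  have : Nonempty K := hK.to_subtype
  rw [infDist_eq_iInf, Real.mul_iInf_of_nonneg hℓ]
  refine le_ciInf fun ⟨k, hk⟩ => ?_
  calc -z x ≤ z (k - x) := by linarith [hz k hk, map_sub z k x]
    _ ≤ ‖z (k - x)‖ := le_abs_self _
    _ ≤ ℓ * dist x k := by rw [dist_comm, dist_eq_norm]; exact z.le_of_opNorm_le hzℓ _

theorem subdifferential_mul_infDist {K : Set V}
    (hK : ∀ c : ℝ, 0 ≤ c → ∀ x ∈ K, c • x ∈ K) {x₀ : V} (hx₀ : x₀ ∈ K) {ℓ : ℝ} (hℓ : 0 ≤ ℓ) :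
    subdifferential (fun x => ℓ * infDist x K) x₀ =
      -{z : V →L[ℝ] ℝ | (∀ v ∈ K, 0 ≤ z v) ∧ z x₀ = 0 ∧ ‖z‖ ≤ ℓ} := by
  ext q
  refine ⟨neg_mem_of_mem_subdifferential_mul_infDist hK hx₀ hℓ, fun ⟨hK_nonneg, hqx₀, hqℓ⟩ x => ?_⟩
  have := neg_apply_le_mul_infDist hℓ ⟨x₀, hx₀⟩ hK_nonneg hqℓ x
  simp only [neg_apply, neg_neg, map_sub] at this hqx₀ ⊢
  rw [infDist_zero_of_mem hx₀]
  linarith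

end

theorem sharp_penalized_iff_dual_inclusion_general
    {V W : Type*} [NormedAddCommGroup V] [NormedSpace ℝ V] [FiniteDimensional ℝ V]
    [NormedAddCommGroup W] [NormedSpace ℝ W]
    (f : V → ℝ) (hf : ConvexOn ℝ Set.univ f)
    (A : V →L[ℝ] W) (K : Set V) (hKconv : Convex ℝ K)
    (hKcone : ∀ c : ℝ, 0 ≤ c → ∀ x ∈ K, c • x ∈ K)
    (x0 : V) (hx0K : x0 ∈ K) (b : W) (hb : b = A x0)
    (μ r ℓ : ℝ) (hμ : 0 < μ) (hr : 0 ≤ r) (hℓ : 0 ≤ ℓ) :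
    (∀ x : V,
        (f x + r * ‖A x - b‖ + ℓ * Metric.infDist x K)
          - (f x0 + r * ‖A x0 - b‖ + ℓ * Metric.infDist x0 K)
          ≥ μ * ‖x - x0‖) ↔
      Metric.closedBall (0 : V →L[ℝ] ℝ) μ ⊆
        {g : V →L[ℝ] ℝ | ∀ x : V, f x ≥ f x0 + g (x - x0)}
          - (fun y : W →L[ℝ] ℝ => y.comp A) '' Metric.closedBall 0 r
          - {z : V →L[ℝ] ℝ | (∀ v ∈ K, 0 ≤ z v) ∧ z x0 = 0 ∧ ‖z‖ ≤ ℓ} := by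
  subst hb
  have hfc : Continuous f := continuousOn_univ.1 (hf.continuousOn isOpen_univ)
  have hN : ConvexOn ℝ univ fun x => r * ‖A x - A x0‖ := (convexOn_norm_sub A (A x0)).smul hr
  have hD : ConvexOn ℝ univ fun x => ℓ * infDist x K := (convexOn_infDist hKconv).smul hℓ
  have hfN : ConvexOn ℝ univ fun x => f x + r * ‖A x - A x0‖ := hf.add hN
  refine (forall_sub_ge_mul_norm_iff_closedBall_subset_subdifferential
    (F := fun x => f x + r * ‖A x - A x0‖ + ℓ * infDist x K) hμ.le).trans ?_
  rw [subdifferential_add hfN (by fun_prop) hD, subdifferential_add hf hfc hN,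
    subdifferential_mul_norm_sub A x0 hr, subdifferential_mul_infDist hKcone hx0K hℓ,
    ← sub_eq_add_neg, ← sub_eq_add_neg]
  rfl

/-- The exact penalty function `F_{r,ℓ}(x) = f(x) + r‖A x - b‖ + ℓ dist(x,K)`
is `μ`-sharp around a feasible point `x0` iff the closed dual ball of radius `μ` is
contained in `∂f(x0) − A*(B_{W*}(0,r)) − (K* ∩ x0^⊥ ∩ B_{V*}(0,ℓ))`. -/
theorem sharp_penalized_iff_dual_inclusion
    {V W : Type*} [NormedAddCommGroup V] [NormedSpace ℝ V] [FiniteDimensional ℝ V]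
    [NormedAddCommGroup W] [NormedSpace ℝ W] [FiniteDimensional ℝ W]
    (f : V → ℝ) (hf : ConvexOn ℝ Set.univ f)
    (A : V →L[ℝ] W) (K : Set V) (hKclosed : IsClosed K) (hKconv : Convex ℝ K)
    (hKcone : ∀ c : ℝ, 0 ≤ c → ∀ x ∈ K, c • x ∈ K)
    (x0 : V) (hx0K : x0 ∈ K) (b : W) (hb : b = A x0)
    (μ r ℓ : ℝ) (hμ : 0 < μ) (hr : 0 ≤ r) (hℓ : 0 ≤ ℓ) :
    (∀ x : V,
        (f x + r * ‖A x - b‖ + ℓ * Metric.infDist x K)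
          - (f x0 + r * ‖A x0 - b‖ + ℓ * Metric.infDist x0 K)
          ≥ μ * ‖x - x0‖) ↔
      Metric.closedBall (0 : V →L[ℝ] ℝ) μ ⊆
        {g : V →L[ℝ] ℝ | ∀ x : V, f x ≥ f x0 + g (x - x0)}
          - (fun y : W →L[ℝ] ℝ => y.comp A) '' Metric.closedBall 0 r
          - {z : V →L[ℝ] ℝ | (∀ v ∈ K, 0 ≤ z v) ∧ z x0 = 0 ∧ ‖z‖ ≤ ℓ} :=
  sharp_penalized_iff_dual_inclusion_general f hf A K hKconv hKcone x0 hx0K b hb μ r ℓ hμ hr hℓ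
end

section
/- Let x♮ be feasible in min{f(x) : A(x)=b, x ∈ K}. There exist μ > 0 and r, ℓ ≥ 0 such that the problem is (μ,r,ℓ)-sharp around x♮ if and only if 0 lies in the interior of the set ∂f(x♮) − range(A*) − (K* ∩ (x♮)^⊥). -/
/-!
Sharpness gives the interior point: for `‖g‖ ≤ μ` the tilted function `f - g` is minimised
at `x₀` together with its exact penalty `r‖A x - b‖ + ℓ dist(x, K)`. Separating `0` from the open
strict epigraph of the perturbation function (Fenchel duality with attainment) turns the
penalty into multipliers `y ∈ W*` and `z ∈ K* ∩ x₀^⊥` with `g + A* y + z ∈ ∂f(x₀)`.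

Conversely, every `g = a - A* y - z` of the set satisfies
`g (x - x₀) ≤ f x - f x₀ + (‖y‖ + ‖z‖)(‖A x - b‖ + dist(x, K))`. Covering a closed ball of
functionals around `0` inside the set by finitely many balls of half the radius makes the
penalty uniform, and testing against a functional that norms `x - x₀` gives sharpness.
-/

open Set Pointwise

theorem ConvexOn.exists_dual_of_nonneg_add_comp {E F : Type*} [AddCommGroup E] [Module ℝ E]
    [NormedAddCommGroup F] [NormedSpace ℝ F] [FiniteDimensional ℝ F]
    {C : Set E} {p : E → ℝ} (hp : ConvexOn ℝ C p) {φ : F → ℝ} (hφ : ConvexOn ℝ univ φ)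
    (m : E →ₗ[ℝ] F) (h : ∀ e ∈ C, 0 ≤ p e + φ (m e)) :
    ∃ L : F →L[ℝ] ℝ, ∀ e ∈ C, ∀ w, L (m e) - L w ≤ p e + φ w := by
  rcases C.eq_empty_or_nonempty with rfl | ⟨e₀, he₀⟩
  · exact ⟨0, by simp⟩
  have hG : ConvexOn ℝ (Prod.fst ⁻¹' C) fun q : E × F => p q.1 + φ (m q.1 - q.2) :=
    (hp.comp_linearMap (LinearMap.fst ℝ E F)).add <|
      (hφ.comp_linearMap (m ∘ₗ LinearMap.fst ℝ E F - LinearMap.snd ℝ E F)).subset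
        (subset_univ _) (hp.1.linear_preimage _)
  -- the strict epigraph of the value function `w ↦ inf_{e ∈ C} p e + φ (m e - w)`
  set S : Set (F × ℝ) := {q | ∃ e ∈ C, p e + φ (m e - q.1) < q.2}
  have hS : Convex ℝ S := by
    rintro ⟨w₁, t₁⟩ ⟨e₁, he₁, h₁⟩ ⟨w₂, t₂⟩ ⟨e₂, he₂, h₂⟩ a b ha hb hab
    obtain ⟨he, hlt⟩ := hG.convex_strict_epigraph (x := ((e₁, w₁), t₁)) (y := ((e₂, w₂), t₂))
      ⟨he₁, h₁⟩ ⟨he₂, h₂⟩ ha hb hab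
    exact ⟨_, he, hlt⟩
  have hφc : Continuous φ := continuousOn_univ.mp (hφ.continuousOn isOpen_univ)
  have hSo : IsOpen S := by
    have hSU : S = ⋃ e ∈ C, {q : F × ℝ | p e + φ (m e - q.1) < q.2} := by ext; simp [S]
    rw [hSU]
    exact isOpen_biUnion fun e _ =>
      isOpen_lt (continuous_const.add (hφc.comp (continuous_const.sub continuous_fst)))
        continuous_snd
  have h0 : (0 : F × ℝ) ∉ S := by
    rintro ⟨e, he, hlt⟩
    simp only [Prod.fst_zero, Prod.snd_zero, sub_zero] at hlt
    linarith [h e he]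
  obtain ⟨Λ, hΛ⟩ := geometric_hahn_banach_point_open hS hSo h0
  rw [map_zero] at hΛ
  have hsplit : ∀ w t, Λ (w, t) = Λ (w, 0) + t * Λ (0, 1) := fun w t => by
    rw [← smul_eq_mul, ← map_smul, ← map_add, Prod.smul_mk, smul_zero, smul_eq_mul, mul_one,
      Prod.mk_add_mk, add_zero, zero_add]
  set c := Λ (0, 1)
  have hc : 0 < c := by
    have ht : 0 < p e₀ + φ (m e₀) + 1 := by linarith [h e₀ he₀]
    have := hΛ (0, p e₀ + φ (m e₀) + 1) ⟨e₀, he₀, by simp⟩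
    rw [hsplit, Prod.mk_zero_zero, map_zero, zero_add] at this
    exact pos_of_mul_pos_right this ht.le
  refine ⟨-c⁻¹ • Λ.comp (ContinuousLinearMap.inl ℝ F ℝ), fun e he w => ?_⟩
  refine le_of_forall_pos_lt_add fun δ hδ => ?_
  have := hΛ (m e - w, p e + φ w + δ) ⟨e, he, by simpa using hδ⟩
  rw [hsplit] at this
  simp only [FunLike.coe_smul, Pi.smul_apply, ContinuousLinearMap.comp_apply,
    ContinuousLinearMap.inl_apply, smul_eq_mul, ← mul_sub, ← map_sub, Prod.mk_sub_mk, sub_zero]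
  have key := mul_pos (inv_pos.2 hc) this
  rw [mul_add, mul_comm _ c, ← mul_assoc, inv_mul_cancel₀ hc.ne', one_mul] at key
  linarith

theorem IsMinOn.nonneg_and_eq_zero_of_cone {V F : Type*} [AddCommGroup V] [Module ℝ V]
    [FunLike F V ℝ] [LinearMapClass F ℝ V ℝ] {K : Set V} {x0 : V} {z : F}
    (hz : IsMinOn z K x0) (hKcone : ∀ c : ℝ, 0 ≤ c → ∀ x ∈ K, c • x ∈ K) (hx0K : x0 ∈ K) :
    (∀ v ∈ K, 0 ≤ z v) ∧ z x0 = 0 := by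
  have h0 : z x0 ≤ z 0 := hz (by simpa using hKcone 0 le_rfl x0 hx0K)
  have h2 : z x0 ≤ z ((2 : ℝ) • x0) := hz (hKcone 2 zero_le_two x0 hx0K)
  rw [map_zero] at h0
  rw [map_smul, smul_eq_mul] at h2
  have hz0 : z x0 = 0 := by linarith
  exact ⟨fun v hv => hz0 ▸ hz hv, hz0⟩

theorem ContinuousLinearMap.neg_apply_le_opNorm_mul_infDist {V : Type*} [NormedAddCommGroup V]
    [NormedSpace ℝ V] [FiniteDimensional ℝ V] {K : Set V} (hK : K.Nonempty)
    {z : V →L[ℝ] ℝ} (hz : ∀ v ∈ K, 0 ≤ z v) (x : V) : -z x ≤ ‖z‖ * Metric.infDist x K := by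
  obtain ⟨k, hk, hdist⟩ := isClosed_closure.exists_infDist_eq_dist hK.closure x
  have hzk : 0 ≤ z k := closure_minimal hz (isClosed_le continuous_const z.continuous) hk
  rw [← Metric.infDist_closure, hdist, dist_comm, dist_eq_norm]
  calc -z x ≤ z (k - x) := by rw [map_sub]; linarith
    _ ≤ ‖z‖ * ‖k - x‖ := (Real.le_norm_self _).trans (z.le_opNorm _)

theorem exists_nonneg_penalty_of_closedBall_subset {V : Type*} [NormedAddCommGroup V]
    [NormedSpace ℝ V] [FiniteDimensional ℝ V] {ρ : ℝ} (hρ : 0 < ρ) {Φ ψ : V → ℝ}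
    (hψ : ∀ x, 0 ≤ ψ x) (x0 : V)
    (h : ∀ g ∈ Metric.closedBall (0 : V →L[ℝ] ℝ) ρ, ∃ c, ∀ x, g (x - x0) ≤ Φ x + c * ψ x) :
    ∃ c ≥ 0, ∀ x, ρ / 2 * ‖x - x0‖ ≤ Φ x + c * ψ x := by
  obtain ⟨t, hts, htfin, hcover⟩ :=
    (isCompact_closedBall (0 : V →L[ℝ] ℝ) ρ).finite_cover_balls (half_pos hρ)
  choose! c hc using fun g (hg : g ∈ t) => h g (hts hg)
  obtain ⟨C, hC⟩ := (htfin.image c).bddAbove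
  refine ⟨max C 0, le_max_right _ _, fun x => ?_⟩
  obtain ⟨g₁, hg₁, hg₁x⟩ := exists_dual_vector'' ℝ (x - x0)
  have hρg₁ : ρ • g₁ ∈ Metric.closedBall (0 : V →L[ℝ] ℝ) ρ := by
    rw [mem_closedBall_zero_iff, norm_smul, Real.norm_of_nonneg hρ.le]
    exact mul_le_of_le_one_right hρ.le hg₁
  obtain ⟨g, hgt, hgg⟩ := mem_iUnion₂.mp (hcover hρg₁)
  rw [Metric.mem_ball, dist_eq_norm] at hgg
  have hnear : (ρ • g₁ - g) (x - x0) ≤ ρ / 2 * ‖x - x0‖ :=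
    (Real.le_norm_self _).trans <| ((ρ • g₁ - g).le_opNorm _).trans <|
      mul_le_mul_of_nonneg_right hgg.le (norm_nonneg _)
  have hcg : c g * ψ x ≤ max C 0 * ψ x :=
    mul_le_mul_of_nonneg_right ((hC ⟨g, hgt, rfl⟩).trans (le_max_left _ _)) (hψ x)
  simp only [sub_apply, FunLike.coe_smul, Pi.smul_apply, hg₁x,
    RCLike.ofReal_real_eq_id, id, smul_eq_mul] at hnear
  linarith [hc g hgt x]

section KKT

variable {V W : Type*} [NormedAddCommGroup V] [NormedSpace ℝ V]
  [NormedAddCommGroup W] [NormedSpace ℝ W]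

/-- `∂f(x₀) − range A* − (K* ∩ x₀^⊥)`. -/
def kktSet (f : V → ℝ) (A : V →L[ℝ] W) (K : Set V) (x0 : V) : Set (V →L[ℝ] ℝ) :=
  {g : V →L[ℝ] ℝ | ∀ x : V, f x ≥ f x0 + g (x - x0)}
    - Set.range (fun y : W →L[ℝ] ℝ => y.comp A)
    - {z : V →L[ℝ] ℝ | (∀ v ∈ K, 0 ≤ z v) ∧ z x0 = 0}

variable {f : V → ℝ} {A : V →L[ℝ] W} {K : Set V} {x0 : V} {b : W}

theorem mem_kktSet_iff {g : V →L[ℝ] ℝ} :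
    g ∈ kktSet f A K x0 ↔ ∃ (a : V →L[ℝ] ℝ) (y : W →L[ℝ] ℝ) (z : V →L[ℝ] ℝ),
      (∀ x, f x0 + a (x - x0) ≤ f x) ∧ (∀ v ∈ K, 0 ≤ z v) ∧ z x0 = 0 ∧
        g = a - y.comp A - z := by
  constructor
  · rintro ⟨_, ⟨a, ha, _, ⟨y, rfl⟩, rfl⟩, z, ⟨hzK, hz0⟩, rfl⟩
    exact ⟨a, y, z, ha, hzK, hz0, rfl⟩
  · rintro ⟨a, y, z, ha, hzK, hz0, rfl⟩
    exact Set.sub_mem_sub (Set.sub_mem_sub ha ⟨y, rfl⟩) ⟨hzK, hz0⟩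

theorem mem_kktSet_of_zero_mem_kktSet_sub {g : V →L[ℝ] ℝ}
    (h : 0 ∈ kktSet (fun x => f x - g x) A K x0) : g ∈ kktSet f A K x0 := by
  obtain ⟨a, y, z, ha, hzK, hz0, h0⟩ := mem_kktSet_iff.mp h
  refine mem_kktSet_iff.mpr ⟨a + g, y, z, fun x => ?_, hzK, hz0, ?_⟩
  · have := ha x
    simp only [add_apply, map_sub] at this ⊢
    linarith
  · rw [add_sub_right_comm, add_sub_right_comm, ← h0, zero_add]

theorem zero_mem_kktSet_of_isMinOn_penalty [FiniteDimensional ℝ V] [FiniteDimensional ℝ W]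
    (hf : ConvexOn ℝ univ f) (hKconv : Convex ℝ K)
    (hKcone : ∀ c : ℝ, 0 ≤ c → ∀ x ∈ K, c • x ∈ K) (hx0K : x0 ∈ K) (hb : b = A x0)
    {r ℓ : ℝ} (hr : 0 ≤ r) (hℓ : 0 ≤ ℓ)
    (hmin : ∀ x, f x0 ≤ f x + r * ‖A x - b‖ + ℓ * Metric.infDist x K) :
    0 ∈ kktSet f A K x0 := by
  let m : V × V →ₗ[ℝ] W × V :=
    (A.toLinearMap ∘ₗ LinearMap.fst ℝ V V).prod (LinearMap.fst ℝ V V - LinearMap.snd ℝ V V)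
  have hp : ConvexOn ℝ (Prod.snd ⁻¹' K) fun q : V × V => f q.1 - f x0 :=
    ((hf.comp_linearMap (LinearMap.fst ℝ V V)).subset (subset_univ _)
      (hKconv.linear_preimage (LinearMap.snd ℝ V V))).add_const _
  have hφ : ConvexOn ℝ univ fun w : W × V => r * dist w.1 b + ℓ * ‖w.2‖ :=
    (((convexOn_dist b convex_univ).comp_linearMap (LinearMap.fst ℝ W V)).smul hr).add
      ((convexOn_univ_norm.comp_linearMap (LinearMap.snd ℝ W V)).smul hℓ)
  have hm : ∀ x k, m (x, k) = (A x, x - k) := fun _ _ => rfl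
  obtain ⟨L, hL⟩ := hp.exists_dual_of_nonneg_add_comp hφ m <| by
    rintro ⟨x, k⟩ (hk : k ∈ K)
    have hd := Metric.infDist_le_dist_of_mem (x := x) hk
    rw [dist_eq_norm] at hd
    rw [hm, dist_eq_norm]
    nlinarith [hmin x]
  set y := L.comp (ContinuousLinearMap.inl ℝ W V)
  set z := L.comp (ContinuousLinearMap.inr ℝ W V)
  have key : ∀ x, ∀ k ∈ K, y (A x - b) + z (x - k) ≤ f x - f x0 := fun x k hk => by
    have := hL (x, k) hk (b, 0)
    rwa [hm, ← map_sub, Prod.mk_sub_mk, sub_zero, dist_self, norm_zero, mul_zero, mul_zero,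
      add_zero, add_zero, ← L.comp_inl_add_comp_inr] at this
  have hzmin : IsMinOn z K x0 := isMinOn_iff.mpr fun k hk => by
    have := key x0 k hk
    rw [← hb, sub_self, map_zero, zero_add, map_sub, sub_self] at this
    linarith
  obtain ⟨hzK, hz0⟩ := hzmin.nonneg_and_eq_zero_of_cone hKcone hx0K
  refine mem_kktSet_iff.mpr ⟨y.comp A + z, y, z, fun x => ?_, hzK, hz0, by abel⟩
  have := key x 0 (by simpa using hKcone 0 le_rfl x0 hx0K)
  simp only [add_apply, ContinuousLinearMap.comp_apply, map_sub, ← hb,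
    hz0, sub_zero] at this ⊢
  linarith

theorem closedBall_subset_kktSet_of_sharp [FiniteDimensional ℝ V] [FiniteDimensional ℝ W]
    (hf : ConvexOn ℝ univ f) (hKconv : Convex ℝ K)
    (hKcone : ∀ c : ℝ, 0 ≤ c → ∀ x ∈ K, c • x ∈ K) (hx0K : x0 ∈ K) (hb : b = A x0)
    {μ r ℓ : ℝ} (hr : 0 ≤ r) (hℓ : 0 ≤ ℓ)
    (hsharp : ∀ x, f x + r * ‖A x - b‖ + ℓ * Metric.infDist x K - f x0 ≥ μ * ‖x - x0‖) :
    Metric.closedBall 0 μ ⊆ kktSet f A K x0 := by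
  intro g hg
  rw [mem_closedBall_zero_iff] at hg
  refine mem_kktSet_of_zero_mem_kktSet_sub <| zero_mem_kktSet_of_isMinOn_penalty
    (hf.sub (g.toLinearMap.concaveOn convex_univ)) hKconv hKcone hx0K hb hr hℓ fun x => ?_
  have hgx : g (x - x0) ≤ μ * ‖x - x0‖ :=
    (Real.le_norm_self _).trans <| (g.le_opNorm _).trans <|
      mul_le_mul_of_nonneg_right hg (norm_nonneg _)
  rw [map_sub] at hgx
  linarith [hsharp x]

theorem exists_penalty_bound_of_mem_kktSet [FiniteDimensional ℝ V] (hx0K : x0 ∈ K)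
    (hb : b = A x0) {g : V →L[ℝ] ℝ} (hg : g ∈ kktSet f A K x0) :
    ∃ c, ∀ x, g (x - x0) ≤ f x - f x0 + c * (‖A x - b‖ + Metric.infDist x K) := by
  obtain ⟨a, y, z, ha, hzK, hz0, rfl⟩ := mem_kktSet_iff.mp hg
  refine ⟨‖y‖ + ‖z‖, fun x => ?_⟩
  have hy : -y (A x - b) ≤ ‖y‖ * ‖A x - b‖ := (neg_le_abs _).trans (y.le_opNorm _)
  have hz := z.neg_apply_le_opNorm_mul_infDist ⟨x0, hx0K⟩ hzK x
  have hval : (a - y.comp A - z) (x - x0) = a (x - x0) - y (A x - b) - z x := by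
    simp [hb, hz0]
  rw [hval]
  nlinarith [ha x, norm_nonneg y, norm_nonneg z, norm_nonneg (A x - b),
    Metric.infDist_nonneg (x := x) (s := K)]

end KKT

theorem sharp_exists_iff_zero_mem_interior_general
    {V W : Type*} [NormedAddCommGroup V] [NormedSpace ℝ V] [FiniteDimensional ℝ V]
    [NormedAddCommGroup W] [NormedSpace ℝ W] [FiniteDimensional ℝ W]
    (f : V → ℝ) (hf : ConvexOn ℝ Set.univ f)
    (A : V →L[ℝ] W) (K : Set V) (hKconv : Convex ℝ K)
    (hKcone : ∀ c : ℝ, 0 ≤ c → ∀ x ∈ K, c • x ∈ K)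
    (x0 : V) (hx0K : x0 ∈ K) (b : W) (hb : b = A x0) :
    (∃ μ > (0 : ℝ), ∃ r ≥ (0 : ℝ), ∃ ℓ ≥ (0 : ℝ), ∀ x : V,
        (f x + r * ‖A x - b‖ + ℓ * Metric.infDist x K) - f x0 ≥ μ * ‖x - x0‖) ↔
      (0 : V →L[ℝ] ℝ) ∈ interior
        ({g : V →L[ℝ] ℝ | ∀ x : V, f x ≥ f x0 + g (x - x0)}
          - Set.range (fun y : W →L[ℝ] ℝ => y.comp A)
          - {z : V →L[ℝ] ℝ | (∀ v ∈ K, 0 ≤ z v) ∧ z x0 = 0}) := by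
  constructor
  · rintro ⟨μ, hμ, r, hr, ℓ, hℓ, hsharp⟩
    exact mem_interior.mpr ⟨Metric.ball 0 μ, Metric.ball_subset_closedBall.trans
      (closedBall_subset_kktSet_of_sharp hf hKconv hKcone hx0K hb hr hℓ hsharp),
      Metric.isOpen_ball, Metric.mem_ball_self hμ⟩
  · intro h0
    obtain ⟨ρ, hρ, hball⟩ := Metric.mem_nhds_iff.mp (mem_interior_iff_mem_nhds.mp h0)
    obtain ⟨c, hc, hbound⟩ := exists_nonneg_penalty_of_closedBall_subset (half_pos hρ)
      (fun x => add_nonneg (norm_nonneg (A x - b)) Metric.infDist_nonneg) x0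
      fun g hg => exists_penalty_bound_of_mem_kktSet hx0K hb
        (hball (Metric.closedBall_subset_ball (half_lt_self hρ) hg))
    refine ⟨ρ / 2 / 2, by positivity, c, hc, c, hc, fun x => ?_⟩
    have := hbound x
    rw [mul_add] at this
    linarith

/-- For a feasible `x0` of `min{f(x) : A x = b, x ∈ K}`, there exist
`μ > 0` and `r, ℓ ≥ 0` making the problem `(μ,r,ℓ)`-sharp around `x0` iff
`0 ∈ int(∂f(x0) − range A* − (K* ∩ x0^⊥))`. -/
theorem sharp_exists_iff_zero_mem_interior
    {V W : Type*} [NormedAddCommGroup V] [NormedSpace ℝ V] [FiniteDimensional ℝ V]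
    [NormedAddCommGroup W] [NormedSpace ℝ W] [FiniteDimensional ℝ W]
    (f : V → ℝ) (hf : ConvexOn ℝ Set.univ f)
    (A : V →L[ℝ] W) (K : Set V) (hKclosed : IsClosed K) (hKconv : Convex ℝ K)
    (hKcone : ∀ c : ℝ, 0 ≤ c → ∀ x ∈ K, c • x ∈ K)
    (x0 : V) (hx0K : x0 ∈ K) (b : W) (hb : b = A x0) :
    (∃ μ > (0 : ℝ), ∃ r ≥ (0 : ℝ), ∃ ℓ ≥ (0 : ℝ), ∀ x : V,
        (f x + r * ‖A x - b‖ + ℓ * Metric.infDist x K) - f x0 ≥ μ * ‖x - x0‖) ↔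
      (0 : V →L[ℝ] ℝ) ∈ interior
        ({g : V →L[ℝ] ℝ | ∀ x : V, f x ≥ f x0 + g (x - x0)}
          - Set.range (fun y : W →L[ℝ] ℝ => y.comp A)
          - {z : V →L[ℝ] ℝ | (∀ v ∈ K, 0 ≤ z v) ∧ z x0 = 0}) :=
  sharp_exists_iff_zero_mem_interior_general f hf A K hKconv hKcone x0 hx0K b hb
end

section
/- If a problem min{f(x) : A(x)=b, x ∈ K} is (μ,r,ℓ)-sharp around x♮ and x̃ minimizes the perturbed penalized objective F̃_{r,ℓ}(x) = f(x) + r‖A(x) - (b+δ)‖ + ℓ·dist(x,K), then ‖x̃ - x♮‖ ≤ (2r/μ)‖δ‖. -/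
/-- If the problem is `(μ,r,ℓ)`-sharp around `x0` (with `b = A x0`), then any
minimizer `xt` of the perturbed penalized objective (with `b` replaced by `b + δ`)
satisfies `‖xt - x0‖ ≤ (2r/μ)‖δ‖`. -/
theorem noisy_penalized_minimizer_close
    {V W : Type*} [NormedAddCommGroup V] [NormedSpace ℝ V] [FiniteDimensional ℝ V]
    [NormedAddCommGroup W] [NormedSpace ℝ W] [FiniteDimensional ℝ W]
    (f : V → ℝ) (hf : ConvexOn ℝ Set.univ f)
    (A : V →L[ℝ] W) (K : Set V) (hKclosed : IsClosed K) (hKconv : Convex ℝ K)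
    (hKcone : ∀ c : ℝ, 0 ≤ c → ∀ x ∈ K, c • x ∈ K)
    (x0 : V) (hx0K : x0 ∈ K) (b : W) (hb : b = A x0)
    (μ r ℓ : ℝ) (hμ : 0 < μ) (hr : 0 ≤ r) (hℓ : 0 ≤ ℓ)
    (hsharp : ∀ x : V,
      (f x + r * ‖A x - b‖ + ℓ * Metric.infDist x K) - f x0 ≥ μ * ‖x - x0‖)
    (δ : W) (xt : V)
    (hmin : ∀ x : V,
      f xt + r * ‖A xt - (b + δ)‖ + ℓ * Metric.infDist xt K ≤
        f x + r * ‖A x - (b + δ)‖ + ℓ * Metric.infDist x K) :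
    ‖xt - x0‖ ≤ 2 * r / μ * ‖δ‖ := by
  subst hb
  have hd0 : Metric.infDist x0 K = 0 := Metric.infDist_zero_of_mem hx0K
  have h1 := hsharp xt
  have h2 : ‖A xt - A x0‖ ≤ ‖A xt - (A x0 + δ)‖ + ‖δ‖ := by
    calc ‖A xt - A x0‖ = ‖(A xt - (A x0 + δ)) + δ‖ := by abel_nf
      _ ≤ ‖A xt - (A x0 + δ)‖ + ‖δ‖ := norm_add_le _ _
  have h3 := hmin x0
  rw [hd0] at h3
  simp only [sub_add_cancel_left, norm_neg] at h3
  have hkey : μ * ‖xt - x0‖ ≤ 2 * r * ‖δ‖ := by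
    have := mul_le_mul_of_nonneg_left h2 hr
    nlinarith [h1, h3, this]
  rw [div_mul_eq_mul_div, le_div_iff₀ hμ]
  nlinarith
end

section
/- Suppose min{f(x): A(x)=b, x∈K} is (μ,r,ℓ)-sharp around x♮ and δ ∈ W. Define F̃(x) = f(x) + r‖A(x) - (b+δ)‖ + ℓ·dist(x,K) and F̃^thresh(x) = max(F̃(x), F(x♮) + 3r‖δ‖) where F(x) = f(x) + r‖A(x)-b‖ + ℓ·dist(x,K). Then any minimizer x̃ of F̃^thresh satisfies ‖x̃ - x♮‖ ≤ (4r/μ)‖δ‖. -/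
/-- With the thresholded noisy penalized objective
`F̃^thresh(x) = max(F̃(x), F(x0) + 3r‖δ‖)`, any minimizer `xt` satisfies
`‖xt - x0‖ ≤ (4r/μ)‖δ‖`. Here `F(x0) = f(x0)` since `x0` is feasible. -/
theorem thresholded_noisy_minimizer_close
    {V W : Type*} [NormedAddCommGroup V] [NormedSpace ℝ V] [FiniteDimensional ℝ V]
    [NormedAddCommGroup W] [NormedSpace ℝ W] [FiniteDimensional ℝ W]
    (f : V → ℝ) (hf : ConvexOn ℝ Set.univ f)
    (A : V →L[ℝ] W) (K : Set V) (hKclosed : IsClosed K) (hKconv : Convex ℝ K)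
    (hKcone : ∀ c : ℝ, 0 ≤ c → ∀ x ∈ K, c • x ∈ K)
    (x0 : V) (hx0K : x0 ∈ K) (b : W) (hb : b = A x0)
    (μ r ℓ : ℝ) (hμ : 0 < μ) (hr : 0 ≤ r) (hℓ : 0 ≤ ℓ)
    (hsharp : ∀ x : V,
      (f x + r * ‖A x - b‖ + ℓ * Metric.infDist x K) - f x0 ≥ μ * ‖x - x0‖)
    (δ : W) (xt : V)
    (hmin : ∀ x : V,
      max (f xt + r * ‖A xt - (b + δ)‖ + ℓ * Metric.infDist xt K)
          ((f x0 + r * ‖A x0 - b‖ + ℓ * Metric.infDist x0 K) + 3 * r * ‖δ‖) ≤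
        max (f x + r * ‖A x - (b + δ)‖ + ℓ * Metric.infDist x K)
          ((f x0 + r * ‖A x0 - b‖ + ℓ * Metric.infDist x0 K) + 3 * r * ‖δ‖)) :
    ‖xt - x0‖ ≤ 4 * r / μ * ‖δ‖ := by
  have hA0 : A x0 - b = 0 := by rw [hb]; simp
  have hd0 : Metric.infDist x0 K = 0 := by
    rw [Metric.infDist_zero_of_mem hx0K]
  have hF0 : f x0 + r * ‖A x0 - b‖ + ℓ * Metric.infDist x0 K = f x0 := by
    rw [hA0, hd0]; simp
  -- F̃(x0) ≤ f x0 + r‖δ‖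
  have h1 : ‖A x0 - (b + δ)‖ = ‖δ‖ := by
    have : A x0 - (b + δ) = -δ := by rw [hb]; abel
    rw [this, norm_neg]
  have hmin0 := hmin x0
  rw [hF0] at hmin0
  have hrhs : max (f x0 + r * ‖A x0 - (b + δ)‖ + ℓ * Metric.infDist x0 K)
      (f x0 + 3 * r * ‖δ‖) ≤ f x0 + 3 * r * ‖δ‖ := by
    apply max_le _ le_rfl
    rw [h1, hd0]
    nlinarith [norm_nonneg δ]
  have hkey : f xt + r * ‖A xt - (b + δ)‖ + ℓ * Metric.infDist xt K ≤
      f x0 + 3 * r * ‖δ‖ :=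
    le_trans (le_trans (le_max_left _ _) hmin0) hrhs
  -- triangle: ‖A xt - b‖ ≤ ‖A xt - (b+δ)‖ + ‖δ‖
  have htri : ‖A xt - b‖ ≤ ‖A xt - (b + δ)‖ + ‖δ‖ := by
    have : A xt - b = (A xt - (b + δ)) + δ := by abel
    rw [this]; exact norm_add_le _ _
  have hF : f xt + r * ‖A xt - b‖ + ℓ * Metric.infDist xt K ≤ f x0 + 4 * r * ‖δ‖ := by
    nlinarith [mul_le_mul_of_nonneg_left htri hr]
  have hs := hsharp xt
  have : μ * ‖xt - x0‖ ≤ 4 * r * ‖δ‖ := by linarith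
  rw [div_mul_eq_mul_div, le_div_iff₀ hμ]
  linarith [this]
end

section
/- Suppose F_{r,ℓ}(x) = f(x) + r‖A(x) - A(x♮)‖ + ℓ·dist(x,K) is μ-sharp around x♮. Let U be a finite-dimensional normed space, B: V → U linear with r‖B‖ < μ (operator norm), and δ ∈ U. Then the function x ↦ F_{r,ℓ}(x) + r‖B(x) - B(x♮) - δ‖ is (μ - r‖B‖)-sharp around x♮; in particular x♮ is its unique minimizer. -/
/-- If `F_{r,ℓ}(x) = f(x) + r‖A x - A x0‖ + ℓ dist(x,K)` is `μ`-sharp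
around `x0`, `B : V → U` is linear with `r‖B‖ < μ`, and `δ ∈ U`, then
`x ↦ F_{r,ℓ}(x) + r‖B x - B x0 - δ‖` is `(μ - r‖B‖)`-sharp around `x0`;
in particular `x0` is its unique minimizer. -/
theorem sparse_corruption_preserves_sharpness
    {V W U : Type*} [NormedAddCommGroup V] [NormedSpace ℝ V] [FiniteDimensional ℝ V]
    [NormedAddCommGroup W] [NormedSpace ℝ W] [FiniteDimensional ℝ W]
    [NormedAddCommGroup U] [NormedSpace ℝ U] [FiniteDimensional ℝ U]
    (f : V → ℝ) (hf : ConvexOn ℝ Set.univ f)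
    (A : V →L[ℝ] W) (K : Set V) (hKclosed : IsClosed K) (hKconv : Convex ℝ K)
    (hKcone : ∀ c : ℝ, 0 ≤ c → ∀ x ∈ K, c • x ∈ K)
    (x0 : V) (hx0K : x0 ∈ K)
    (μ r ℓ : ℝ) (hμ : 0 < μ) (hr : 0 ≤ r) (hℓ : 0 ≤ ℓ)
    (F : V → ℝ)
    (hF : F = fun x => f x + r * ‖A x - A x0‖ + ℓ * Metric.infDist x K)
    (hsharp : ∀ x : V, F x - F x0 ≥ μ * ‖x - x0‖)
    (B : V →L[ℝ] U) (hB : r * ‖B‖ < μ) (δ : U) :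
    (∀ x : V,
        (F x + r * ‖B x - B x0 - δ‖) - (F x0 + r * ‖B x0 - B x0 - δ‖)
          ≥ (μ - r * ‖B‖) * ‖x - x0‖) ∧
    (∀ x : V, x ≠ x0 →
        F x0 + r * ‖B x0 - B x0 - δ‖ < F x + r * ‖B x - B x0 - δ‖) := by
  have key : ∀ x : V,
      (F x + r * ‖B x - B x0 - δ‖) - (F x0 + r * ‖B x0 - B x0 - δ‖)
        ≥ (μ - r * ‖B‖) * ‖x - x0‖ := by
    intro x
    have h1 : ‖B x0 - B x0 - δ‖ ≤ ‖B x - B x0 - δ‖ + ‖B x - B x0‖ := by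
      have := norm_sub_le (B x - B x0 - δ) (B x - B x0)
      simpa [sub_sub_cancel_left, norm_neg] using this
    have h2 : ‖B x - B x0‖ ≤ ‖B‖ * ‖x - x0‖ := by
      simpa [map_sub] using B.le_opNorm (x - x0)
    have h3 : r * ‖B x0 - B x0 - δ‖ - r * ‖B x - B x0 - δ‖ ≤ r * ‖B‖ * ‖x - x0‖ := by
      nlinarith [hr, h1, h2, norm_nonneg (x - x0)]
    have h4 := hsharp x
    nlinarith [h4]
  refine ⟨key, fun x hx => ?_⟩
  have hpos : 0 < (μ - r * ‖B‖) * ‖x - x0‖ :=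
    mul_pos (by linarith) (norm_pos_iff.2 (sub_ne_zero.2 hx))
  have := key x
  linarith
end

section
/- If ℓ₁-norm minimization min{‖x‖₁ : Ax=b} (with K=V=ℝⁿ) is (μ,r)-sharp around x♮, then there exists y♮ ∈ ℝᵐ such that Aᵀy♮ lies in the relative interior of the subdifferential of ‖·‖₁ at x♮. -/
open Finset

private lemma exists_dual {m n : ℕ} (A : Matrix (Fin m) (Fin n) ℝ)
    (x0 sg : Fin n → ℝ) (β : ℝ) (hβ0 : 0 ≤ β)
    (hpos : ∀ w : Fin n → ℝ, A.mulVec w = 0 →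
      0 ≤ ∑ i, (if x0 i ≠ 0 then sg i * w i else β * |w i|)) :
    ∃ y : Fin m → ℝ, (∀ i, x0 i ≠ 0 → A.transpose.mulVec y i = sg i) ∧
         (∀ i, x0 i = 0 → |A.transpose.mulVec y i| ≤ β) := by
  classical
  by_contra hcon
  push_neg at hcon
  set B : Set (Fin n → ℝ) :=
    Set.univ.pi (fun i => if x0 i ≠ 0 then {sg i} else Set.Icc (-β) β) with hB
  set T : Set (Fin n → ℝ) := ((LinearMap.range (Matrix.mulVecLin A.transpose) : Submodule ℝ (Fin n → ℝ)) : Set (Fin n → ℝ)) with hT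
  have hmemB : ∀ g : Fin n → ℝ, g ∈ B ↔
      (∀ i, x0 i ≠ 0 → g i = sg i) ∧ (∀ i, x0 i = 0 → |g i| ≤ β) := by
    intro g
    constructor
    · intro hg
      constructor
      · intro i hi
        have h := hg i (Set.mem_univ i)
        simp only [hi, ne_eq, not_false_iff, if_true, Set.mem_singleton_iff] at h
        simpa [hi] using h
      · intro i hi
        have h := hg i (Set.mem_univ i)
        simp only [hi, ne_eq, not_true_eq_false, if_false, Set.mem_Icc] at h
        exact abs_le.2 h
    · rintro ⟨h1, h2⟩ i _
      by_cases hi : x0 i = 0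
      · simp only [hi, ne_eq, not_true_eq_false, if_false, Set.mem_Icc]
        exact abs_le.1 (h2 i hi)
      · simp only [hi, ne_eq, not_false_iff, if_true, Set.mem_singleton_iff]
        exact h1 i hi
  have hBconv : Convex ℝ B := by
    apply convex_pi
    intro i _
    split_ifs
    · exact convex_singleton _
    · exact convex_Icc _ _
  have hBcomp : IsCompact B := by
    apply isCompact_univ_pi
    intro i
    split_ifs
    · exact isCompact_singleton
    · exact isCompact_Icc
  have hTconv : Convex ℝ T := (LinearMap.range (Matrix.mulVecLin A.transpose)).convex
  have hTclosed : IsClosed T := (LinearMap.range (Matrix.mulVecLin A.transpose)).closed_of_finiteDimensional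
  have hdisj : Disjoint B T := by
    rw [Set.disjoint_left]
    intro v hvB hvT
    obtain ⟨y, hy⟩ := hvT
    rw [Matrix.mulVecLin_apply] at hy
    obtain ⟨h1, h2⟩ := (hmemB v).1 hvB
    obtain ⟨i, hi0, hi1⟩ := hcon y (fun i hi => by rw [hy]; exact h1 i hi)
    have : |A.transpose.mulVec y i| ≤ β := by rw [hy]; exact h2 i hi0
    linarith
  obtain ⟨f, u, v, hfB, huv, hfT⟩ :=
    geometric_hahn_banach_compact_closed hBconv hBcomp hTconv hTclosed hdisj
  -- f vanishes on T
  have hf0 : ∀ g ∈ T, f g = 0 := by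
    intro g hg
    by_contra hne
    have hsmul : ((v - 1) / f g) • g ∈ T := by
      exact Submodule.smul_mem _ _ hg
    have := hfT _ hsmul
    rw [map_smul, smul_eq_mul, div_mul_cancel₀ _ hne] at this
    linarith
  have hv0 : v < 0 := by
    have := hfT 0 (Submodule.zero_mem _)
    simpa using this
  -- the coefficient vector w
  set w : Fin n → ℝ := fun i => f (Pi.single i 1) with hw
  have hfg : ∀ g : Fin n → ℝ, f g = ∑ i, g i * w i := by
    intro g
    have hg : g = ∑ i, g i • (Pi.single i (1:ℝ) : Fin n → ℝ) := by
      funext j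
      rw [Finset.sum_apply]
      simp [Pi.single_apply, mul_ite]
    conv_lhs => rw [hg]
    rw [map_sum]
    refine Finset.sum_congr rfl fun i _ => ?_
    rw [map_smul, smul_eq_mul]
  have hker : A.mulVec w = 0 := by
    funext k
    have hrow : (fun j => A k j) ∈ T := by
      refine ⟨Pi.single k 1, ?_⟩
      rw [Matrix.mulVecLin_apply]
      funext j
      simp [Matrix.mulVec, dotProduct, Pi.single_apply, Matrix.transpose_apply]
    have h0 : f (fun j => A k j) = 0 := hf0 _ hrow
    rw [hfg] at h0
    show dotProduct (A k) w = 0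
    simpa [dotProduct] using h0
  -- the contradiction point
  set g0 : Fin n → ℝ := fun i => if x0 i ≠ 0 then sg i else β * (if 0 ≤ w i then 1 else -1) with hg0
  have hg0B : g0 ∈ B := by
    rw [hmemB]
    constructor
    · intro i hi; simp [hg0, hi]
    · intro i hi
      have hgi : g0 i = β * (if 0 ≤ w i then 1 else -1) := by simp [hg0, hi]
      rw [hgi, abs_mul, abs_of_nonneg hβ0]
      split_ifs <;> norm_num
  have hlt : f g0 < 0 := lt_trans (hfB g0 hg0B) (lt_trans huv hv0)
  have heq : f g0 = ∑ i, (if x0 i ≠ 0 then sg i * w i else β * |w i|) := by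
    rw [hfg]
    congr 1
    ext i
    by_cases hi : x0 i ≠ 0
    · simp [hg0, hi]
    · simp only [hg0, hi, if_false]
      rcases le_or_gt 0 (w i) with h | h
      · rw [if_pos h, abs_of_nonneg h]; ring
      · rw [if_neg (not_le.2 h), abs_of_neg h]; ring
  have := hpos w hker
  rw [heq] at hlt
  linarith

private noncomputable def fixedCoords {n : ℕ} (x0 sg : Fin n → ℝ) : AffineSubspace ℝ (Fin n → ℝ) where
  carrier := {g | ∀ i, x0 i ≠ 0 → g i = sg i}
  smul_vsub_vadd_mem' := by
    intro c a b d ha hb hd i hi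
    have h : (c • (a -ᵥ b) +ᵥ d) i = c * (a i - b i) + d i := rfl
    show (c • (a -ᵥ b) +ᵥ d) i = sg i
    rw [h, ha i hi, hb i hi, hd i hi]; ring

/-- If ℓ₁-norm minimization `min{‖x‖₁ : Ax = b}` is `(μ,r)`-sharp around
`x0` (w.r.t. the ℓ₁ norm), then there exists `y ∈ ℝᵐ` with `Aᵀ y` in the relative
interior of the subdifferential of `‖·‖₁` at `x0`. -/
theorem l1_sharp_implies_strict_complementarity
    {m n : ℕ} (A : Matrix (Fin m) (Fin n) ℝ) (x0 : Fin n → ℝ)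
    (b : Fin m → ℝ) (hb : b = A.mulVec x0)
    (μ r : ℝ) (hμ : 0 < μ) (hr : 0 ≤ r)
    (hsharp : ∀ x : Fin n → ℝ,
      (∑ i, |x i|) + r * (∑ j, |A.mulVec x j - b j|) - (∑ i, |x0 i|)
        ≥ μ * ∑ i, |x i - x0 i|) :
    ∃ y : Fin m → ℝ, A.transpose.mulVec y ∈
      intrinsicInterior ℝ
        {g : Fin n → ℝ | ∀ x : Fin n → ℝ,
          (∑ i, |x i|) ≥ (∑ i, |x0 i|) + ∑ i, g i * (x i - x0 i)} := by
  classical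
  set sg : Fin n → ℝ := fun i => if x0 i < 0 then -1 else 1 with hsg
  have hsg_abs : ∀ i, |sg i| = 1 := by
    intro i; simp only [hsg]; split_ifs <;> norm_num
  have hsg_mul : ∀ i, sg i * x0 i = |x0 i| := by
    intro i; simp only [hsg]; split_ifs with h
    · rw [abs_of_neg h]; ring
    · rw [abs_of_nonneg (not_lt.1 h)]; ring
  set S : Set (Fin n → ℝ) :=
    {g : Fin n → ℝ | ∀ x : Fin n → ℝ,
      (∑ i, |x i|) ≥ (∑ i, |x0 i|) + ∑ i, g i * (x i - x0 i)} with hS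
  -- membership criterion (sufficient direction)
  have memS : ∀ g : Fin n → ℝ, (∀ i, x0 i ≠ 0 → g i = sg i) →
      (∀ i, x0 i = 0 → |g i| ≤ 1) → g ∈ S := by
    intro g h1 h2
    rw [hS]
    intro x
    have hpt : ∀ i, |x0 i| + g i * (x i - x0 i) ≤ |x i| := by
      intro i
      by_cases hi : x0 i = 0
      · have hg := h2 i hi
        have hgx : g i * x i ≤ |x i| := by
          calc g i * x i ≤ |g i * x i| := le_abs_self _
            _ = |g i| * |x i| := abs_mul _ _
            _ ≤ 1 * |x i| := mul_le_mul_of_nonneg_right hg (abs_nonneg _)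
            _ = |x i| := one_mul _
        rw [hi]
        simpa using hgx
      · rw [h1 i hi]
        have h3 : sg i * x i ≤ |x i| := by
          calc sg i * x i ≤ |sg i * x i| := le_abs_self _
            _ = |sg i| * |x i| := abs_mul _ _
            _ = |x i| := by rw [hsg_abs i, one_mul]
        have h4 := hsg_mul i
        rw [mul_sub]
        linarith
    rw [ge_iff_le]
    calc (∑ i, |x0 i|) + ∑ i, g i * (x i - x0 i)
        = ∑ i, (|x0 i| + g i * (x i - x0 i)) := (Finset.sum_add_distrib).symm
      _ ≤ ∑ i, |x i| := Finset.sum_le_sum (fun i _ => hpt i)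
  -- necessary direction on the support
  have hSC : ∀ g ∈ S, ∀ i, x0 i ≠ 0 → g i = sg i := by
    intro g hg i hi
    have key : ∀ c : ℝ, (∑ k, |Function.update x0 i c k|)
        = (∑ k, |x0 k|) + (|c| - |x0 i|) := by
      intro c
      have hpt : ∀ k : Fin n, |Function.update x0 i c k|
          = |x0 k| + (if k = i then |c| - |x0 i| else 0) := by
        intro k
        by_cases hk : k = i
        · subst hk; simp [Function.update_self]
        · simp [Function.update_of_ne hk, hk]
      rw [Finset.sum_congr rfl (fun k _ => hpt k), Finset.sum_add_distrib,
        Finset.sum_ite_eq' Finset.univ i (fun _ => |c| - |x0 i|)]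
      simp
    have key2 : ∀ c : ℝ, (∑ k, g k * (Function.update x0 i c k - x0 k))
        = g i * (c - x0 i) := by
      intro c
      have hpt : ∀ k : Fin n, g k * (Function.update x0 i c k - x0 k)
          = if k = i then g i * (c - x0 i) else 0 := by
        intro k
        by_cases hk : k = i
        · subst hk; simp [Function.update_self]
        · simp [Function.update_of_ne hk, hk]
      rw [Finset.sum_congr rfl (fun k _ => hpt k),
        Finset.sum_ite_eq' Finset.univ i (fun _ => g i * (c - x0 i))]
      simp
    have h1 := hg (Function.update x0 i 0)
    have h2 := hg (Function.update x0 i (2 * x0 i))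
    rw [ge_iff_le, key, key2] at h1 h2
    simp only [abs_zero] at h1
    have habs2 : |2 * x0 i| = 2 * |x0 i| := by rw [abs_mul]; norm_num
    rw [habs2] at h2
    -- h1 : ∑|x0| + g i * (0 - x0 i) ≤ ∑|x0| + (0 - |x0 i|)
    -- h2 : ∑|x0| + g i * (2 x0 i - x0 i) ≤ ∑|x0| + (2|x0 i| - |x0 i|)
    have e1 : |x0 i| ≤ g i * x0 i := by nlinarith [h1]
    have e2 : g i * x0 i ≤ |x0 i| := by nlinarith [h2]
    have : g i * x0 i = sg i * x0 i := by rw [hsg_mul i]; linarith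
    exact mul_right_cancel₀ hi this
  -- linearized sharpness on the kernel
  have hL : ∀ w : Fin n → ℝ, A.mulVec w = 0 →
      μ * (∑ i, |w i|) ≤ ∑ i, (if x0 i ≠ 0 then sg i * w i else |w i|) := by
    intro w hw
    set D : ℝ := ∑ i, |w i| / (if x0 i ≠ 0 then |x0 i| else 1) with hD
    have hterm : ∀ i : Fin n, 0 ≤ |w i| / (if x0 i ≠ 0 then |x0 i| else 1) := by
      intro i
      apply div_nonneg (abs_nonneg _)
      split_ifs
      · exact abs_nonneg _
      · norm_num
    have hD0 : 0 ≤ D := Finset.sum_nonneg (fun i _ => hterm i)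
    have h1D : (0:ℝ) < 1 + D := by linarith
    set t : ℝ := 1 / (1 + D) with ht'
    have ht : 0 < t := by rw [ht']; positivity
    have hkey : ∀ i, x0 i ≠ 0 → t * |w i| ≤ |x0 i| := by
      intro i hi
      have h1 : |w i| / |x0 i| ≤ D := by
        have h := Finset.single_le_sum (f := fun i => |w i| / (if x0 i ≠ 0 then |x0 i| else 1))
          (fun j _ => hterm j) (Finset.mem_univ i)
        simp only [if_pos hi] at h
        rw [hD]
        exact h
      have hx : 0 < |x0 i| := abs_pos.2 hi
      rw [div_le_iff₀ hx] at h1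
      have h3 : t * |w i| ≤ t * (D * |x0 i|) := mul_le_mul_of_nonneg_left h1 ht.le
      have h4 : t * (D * |x0 i|) ≤ |x0 i| := by
        rw [ht', one_div, inv_mul_le_iff₀ h1D]
        nlinarith [hx.le, hD0]
      linarith
    set x : Fin n → ℝ := fun i => x0 i + t * w i with hx
    have hAx : ∀ j, A.mulVec x j - b j = 0 := by
      intro j
      have h1 : A.mulVec x j = A.mulVec x0 j + t * A.mulVec w j := by
        simp only [Matrix.mulVec, dotProduct, hx]
        rw [Finset.mul_sum, ← Finset.sum_add_distrib]
        apply Finset.sum_congr rfl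
        intro i _
        ring
      have h0 : A.mulVec w j = 0 := by rw [hw]; rfl
      rw [h1, hb, h0]
      ring
    have habs : ∀ i, |x i| = |x0 i| + t * (if x0 i ≠ 0 then sg i * w i else |w i|) := by
      intro i
      show |x0 i + t * w i| = _
      by_cases hi : x0 i = 0
      · rw [if_neg (fun h => h hi), hi]
        simp [abs_mul, abs_of_pos ht]
      · rw [if_pos hi]
        have hb1 : t * |w i| ≤ |x0 i| := hkey i hi
        have hb2 : t * w i ≤ t * |w i| := mul_le_mul_of_nonneg_left (le_abs_self _) ht.le
        have hb3 : -(t * |w i|) ≤ t * w i := by nlinarith [neg_abs_le (w i)]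
        rcases lt_or_ge (x0 i) 0 with hneg | hpos
        · have hsgi : sg i = -1 := by simp [hsg, hneg]
          rw [abs_of_neg hneg] at hb1
          rw [hsgi, abs_of_nonpos (by linarith), abs_of_neg hneg]
          ring
        · have hx0pos : 0 < x0 i := lt_of_le_of_ne hpos (Ne.symm hi)
          have hsgi : sg i = 1 := by simp [hsg, not_lt.2 hpos]
          rw [abs_of_pos hx0pos] at hb1
          rw [hsgi, abs_of_nonneg (by linarith), abs_of_pos hx0pos]
          ring
    have hinst := hsharp x
    have e1 : (∑ i, |x i|) = (∑ i, |x0 i|)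
        + t * ∑ i, (if x0 i ≠ 0 then sg i * w i else |w i|) := by
      rw [Finset.sum_congr rfl (fun i (_ : i ∈ Finset.univ) => habs i),
        Finset.sum_add_distrib, Finset.mul_sum]
    have e2 : (∑ j, |A.mulVec x j - b j|) = 0 := by
      apply Finset.sum_eq_zero
      intro j _
      rw [hAx j, abs_zero]
    have e3 : (∑ i, |x i - x0 i|) = t * ∑ i, |w i| := by
      rw [Finset.mul_sum]
      apply Finset.sum_congr rfl
      intro i _
      show |x0 i + t * w i - x0 i| = t * |w i|
      rw [add_sub_cancel_left, abs_mul, abs_of_pos ht]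
    rw [e1, e2, e3, ge_iff_le, mul_zero] at hinst
    have h6 : t * (μ * ∑ i, |w i|) ≤ t * ∑ i, (if x0 i ≠ 0 then sg i * w i else |w i|) := by
      calc t * (μ * ∑ i, |w i|) = μ * (t * ∑ i, |w i|) := by ring
        _ ≤ t * ∑ i, (if x0 i ≠ 0 then sg i * w i else |w i|) := by linarith
    exact le_of_mul_le_mul_left h6 ht
  -- apply the dual existence lemma
  set β : ℝ := 1 - min μ 1 / 2 with hβ
  have hβ0 : 0 ≤ β := by
    rw [hβ]; have := min_le_right μ 1; linarith
  have hβ1 : β < 1 := by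
    rw [hβ]; have := lt_min hμ one_pos; linarith
  have hpos : ∀ w : Fin n → ℝ, A.mulVec w = 0 →
      0 ≤ ∑ i, (if x0 i ≠ 0 then sg i * w i else β * |w i|) := by
    intro w hw
    have h1 := hL w hw
    have e : (∑ i, (if x0 i ≠ 0 then sg i * w i else β * |w i|))
        = (∑ i, (if x0 i ≠ 0 then sg i * w i else |w i|))
          - (1 - β) * ∑ i, (if x0 i ≠ 0 then 0 else |w i|) := by
      rw [Finset.mul_sum, ← Finset.sum_sub_distrib]
      apply Finset.sum_congr rfl
      intro i _
      split_ifs <;> ring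
    have hQ1 : (∑ i, (if x0 i ≠ 0 then 0 else |w i|)) ≤ ∑ i, |w i| :=
      Finset.sum_le_sum (fun i _ => by split_ifs; exacts [abs_nonneg _, le_refl _])
    have hQ0 : 0 ≤ ∑ i, (if x0 i ≠ 0 then 0 else |w i|) :=
      Finset.sum_nonneg (fun i _ => by split_ifs; exacts [le_refl _, abs_nonneg _])
    have hβμ : 1 - β ≤ μ := by
      rw [hβ]; have := min_le_left μ 1; linarith
    rw [e]
    have h2 : μ * (∑ i, (if x0 i ≠ 0 then 0 else |w i|)) ≤ μ * ∑ i, |w i| :=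
      mul_le_mul_of_nonneg_left hQ1 hμ.le
    have h3 : (1 - β) * (∑ i, (if x0 i ≠ 0 then 0 else |w i|))
        ≤ μ * (∑ i, (if x0 i ≠ 0 then 0 else |w i|)) :=
      mul_le_mul_of_nonneg_right hβμ hQ0
    linarith
  obtain ⟨y, hy1, hy2⟩ := exists_dual A x0 sg β hβ0 hpos
  refine ⟨y, ?_⟩
  set v : Fin n → ℝ := A.transpose.mulVec y with hv
  have hvS : v ∈ S := memS v hy1 (fun i hi => le_of_lt (lt_of_le_of_lt (hy2 i hi) hβ1))
  have hspanC : affineSpan ℝ S ≤ fixedCoords x0 sg := affineSpan_le.2 (fun g hg => hSC g hg)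
  rw [mem_intrinsicInterior]
  refine ⟨⟨v, (subset_affineSpan ℝ S) hvS⟩, ?_, rfl⟩
  rw [mem_interior]
  refine ⟨Subtype.val ⁻¹' {g : Fin n → ℝ | ∀ i, x0 i = 0 → |g i| < 1}, ?_, ?_, ?_⟩
  · intro p hp
    have h1 : ∀ i, x0 i ≠ 0 → (p : Fin n → ℝ) i = sg i := hspanC p.2
    exact memS _ h1 (fun i hi => (hp i hi).le)
  · apply IsOpen.preimage continuous_subtype_val
    have hWeq : {g : Fin n → ℝ | ∀ i, x0 i = 0 → |g i| < 1}
        = Set.univ.pi (fun i => if x0 i = 0 then Set.Ioo (-1:ℝ) 1 else Set.univ) := by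
      ext g
      simp only [Set.mem_setOf_eq, Set.mem_pi, Set.mem_univ, true_implies]
      constructor
      · intro h i
        by_cases hi : x0 i = 0
        · simp only [hi, if_true]
          exact Set.mem_Ioo.2 (abs_lt.1 (h i hi))
        · simp [hi]
      · intro h i hi
        have hh := h i
        rw [if_pos hi] at hh
        exact abs_lt.2 (Set.mem_Ioo.1 hh)
    rw [hWeq]
    exact isOpen_set_pi Set.finite_univ
      (fun i _ => by split_ifs <;> first | exact isOpen_Ioo | exact isOpen_univ)
  · intro i hi
    exact lt_of_le_of_lt (hy2 i hi) hβ1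
end

section
/- Consider min{‖X‖₁ : X_{1,1} = 1} over X ∈ ℝ^{2×2} where ‖·‖₁ is the nuclear norm. The unique minimizer is X♮ = E_{1,1}, and strict complementarity holds: 0 ∈ relint(∂‖·‖₁(X♮) − range(A*)). However, the problem is not (μ,r)-sharp around X♮ for any μ>0, r≥0, since ∂‖·‖₁(X♮) − range(A*) is contained in a 2-dimensional subspace of ℝ^{2×2} (the diagonal matrices). -/
open Pointwise

/-- The nuclear norm of a `2 × 2` real matrix: since `σ₁² + σ₂² = ‖X‖_F²` and
`σ₁σ₂ = |det X|`, we have `σ₁ + σ₂ = √(‖X‖_F² + 2|det X|)`. -/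
noncomputable def nuc2 (X : Matrix (Fin 2) (Fin 2) ℝ) : ℝ :=
  Real.sqrt ((∑ i, ∑ j, (X i j) ^ 2) + 2 * |X.det|)

/-- The matrix `E_{1,1}`. -/
noncomputable def E11 : Matrix (Fin 2) (Fin 2) ℝ := Matrix.single 0 0 1

/-!
The dual certificates `diag(1, α)`, `|α| ≤ 1`, give `X₁₁ + α X₂₂ ≤ ‖X‖₁`; testing the
subgradient inequality on a few matrices shows these are all the subgradients at `E₁₁`.
Hence `∂‖·‖₁(E₁₁) − range A*` is the strip of diagonal matrices with `|G₂₂| ≤ 1`, which has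
`0` in its relative interior but spans only the diagonal. Sharpness fails along the
off-diagonal direction: `‖E₁₁ + t E₁₂‖₁ − 1 = √(1 + t²) − 1` is of order `t²`, while the
constraint residual vanishes and `‖t E₁₂‖₁ = |t|`.
-/

section IntrinsicInterior

variable {𝕜 V P : Type*} [Ring 𝕜] [AddCommGroup V] [Module 𝕜 V] [TopologicalSpace P]
  [AddTorsor V P]

theorem mem_intrinsicInterior_of_isOpen_of_inter_affineSpan_subset {s U : Set P} {x : P}
    (hU : IsOpen U) (hxU : x ∈ U) (hxs : x ∈ s) (hUs : U ∩ affineSpan 𝕜 s ⊆ s) :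
    x ∈ intrinsicInterior 𝕜 s := by
  refine ⟨⟨x, subset_affineSpan 𝕜 s hxs⟩, ?_, rfl⟩
  rw [mem_interior]
  exact ⟨((↑) : affineSpan 𝕜 s → P) ⁻¹' U, fun y hy => hUs ⟨hy, y.2⟩,
    hU.preimage continuous_subtype_val, hxU⟩

end IntrinsicInterior

theorem E11_eq : E11 = !![1, 0; 0, 0] := by
  ext i j
  fin_cases i <;> fin_cases j <;> simp [E11, Matrix.single]

theorem nuc2_eq_sqrt (X : Matrix (Fin 2) (Fin 2) ℝ) :
    nuc2 X = √(X 0 0 ^ 2 + X 0 1 ^ 2 + X 1 0 ^ 2 + X 1 1 ^ 2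
      + 2 * |X 0 0 * X 1 1 - X 0 1 * X 1 0|) := by
  simp only [nuc2, Fin.sum_univ_two, Matrix.det_fin_two]
  ring_nf

theorem nuc2_E11 : nuc2 E11 = 1 := by
  rw [nuc2_eq_sqrt, E11_eq]
  norm_num

theorem add_mul_le_nuc2 {α : ℝ} (hα : |α| ≤ 1) (X : Matrix (Fin 2) (Fin 2) ℝ) :
    X 0 0 + α * X 1 1 ≤ nuc2 X := by
  obtain ⟨hα₁, hα₂⟩ := abs_le.1 hα
  set a := X 0 0
  set b := X 0 1
  set c := X 1 0
  set d := X 1 1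
  rw [nuc2_eq_sqrt]
  apply Real.le_sqrt_of_sq_le
  have hdet : α * (a * d - b * c) ≤ |a * d - b * c| := by
    calc α * (a * d - b * c) ≤ |α| * |a * d - b * c| := by rw [← abs_mul]; exact le_abs_self _
      _ ≤ |a * d - b * c| := mul_le_of_le_one_left (abs_nonneg _) hα
  -- the remaining slack is `(1-α)(b+c)²/2 + (1+α)(b-c)²/2 + (1-α²)d²`
  nlinarith [mul_nonneg (sub_nonneg.2 hα₂) (sq_nonneg (b + c)),
    mul_nonneg (neg_le_iff_add_nonneg'.1 hα₁) (sq_nonneg (b - c)),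
    mul_nonneg (mul_nonneg (sub_nonneg.2 hα₂) (neg_le_iff_add_nonneg'.1 hα₁)) (sq_nonneg d)]

theorem apply_zero_zero_le_nuc2 (X : Matrix (Fin 2) (Fin 2) ℝ) : X 0 0 ≤ nuc2 X := by
  simpa using add_mul_le_nuc2 (α := 0) (by simp) X

theorem eq_E11_of_nuc2_eq_one {X : Matrix (Fin 2) (Fin 2) ℝ} (h₀₀ : X 0 0 = 1)
    (h : nuc2 X = 1) : X = E11 := by
  rw [nuc2_eq_sqrt, Real.sqrt_eq_one, h₀₀] at h
  have hdet := abs_nonneg (1 * X 1 1 - X 0 1 * X 1 0)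
  have h₀₁ : X 0 1 = 0 := by nlinarith [sq_nonneg (X 0 1), sq_nonneg (X 1 0), sq_nonneg (X 1 1)]
  have h₁₀ : X 1 0 = 0 := by nlinarith [sq_nonneg (X 0 1), sq_nonneg (X 1 0), sq_nonneg (X 1 1)]
  have h₁₁ : X 1 1 = 0 := by nlinarith [sq_nonneg (X 0 1), sq_nonneg (X 1 0), sq_nonneg (X 1 1)]
  ext i j
  fin_cases i <;> fin_cases j <;> simp [E11_eq, h₀₀, h₀₁, h₁₀, h₁₁]

theorem eq_zero_of_forall_one_add_mul_le_sqrt {t : ℝ}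
    (h : ∀ s : ℝ, 1 + s * t ≤ √(1 + s ^ 2)) : t = 0 := by
  by_contra ht
  have hlt : √(1 + t ^ 2) < 1 + t ^ 2 :=
    Real.sqrt_lt_self_iff.2 (lt_add_of_pos_right 1 (by positivity))
  linarith [h t]

/-- The subdifferential of `nuc2` at `E11`, for the Frobenius pairing. -/
def nuc2SubdiffE11 : Set (Matrix (Fin 2) (Fin 2) ℝ) :=
  {G | ∀ X : Matrix (Fin 2) (Fin 2) ℝ, nuc2 X ≥ nuc2 E11 + ∑ i, ∑ j, G i j * (X i j - E11 i j)}

theorem mem_nuc2SubdiffE11_iff_forall {G : Matrix (Fin 2) (Fin 2) ℝ} :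
    G ∈ nuc2SubdiffE11 ↔ ∀ X : Matrix (Fin 2) (Fin 2) ℝ,
      1 + G 0 0 * (X 0 0 - 1) + G 0 1 * X 0 1 + G 1 0 * X 1 0 + G 1 1 * X 1 1 ≤ nuc2 X := by
  refine forall_congr' fun X => ?_
  rw [nuc2_E11, E11_eq, ge_iff_le]
  simp only [Fin.sum_univ_two, Matrix.of_apply, Matrix.cons_val', Matrix.cons_val_zero, Matrix.cons_val_one,
    Matrix.empty_val', Matrix.cons_val_fin_one]
  ring_nf

theorem mem_nuc2SubdiffE11_iff {G : Matrix (Fin 2) (Fin 2) ℝ} :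
    G ∈ nuc2SubdiffE11 ↔ G 0 0 = 1 ∧ G 0 1 = 0 ∧ G 1 0 = 0 ∧ |G 1 1| ≤ 1 := by
  rw [mem_nuc2SubdiffE11_iff_forall]
  constructor
  · intro h
    have h₀₀ : G 0 0 = 1 := by
      have h₀ := h 0
      have h₂ := h !![2, 0; 0, 0]
      rw [nuc2_eq_sqrt] at h₀ h₂
      norm_num at h₀ h₂
      linarith
    have h₀₁ : G 0 1 = 0 := eq_zero_of_forall_one_add_mul_le_sqrt fun s => by
      have := h !![1, s; 0, 0]
      rw [nuc2_eq_sqrt] at this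
      norm_num at this
      linarith
    have h₁₀ : G 1 0 = 0 := eq_zero_of_forall_one_add_mul_le_sqrt fun s => by
      have := h !![1, 0; s, 0]
      rw [nuc2_eq_sqrt] at this
      norm_num at this
      linarith
    have h₁₁ : |G 1 1| ≤ 1 := by
      have hpos := h !![1, 0; 0, 1]
      have hneg := h !![1, 0; 0, -1]
      rw [nuc2_eq_sqrt] at hpos hneg
      norm_num at hpos hneg
      exact abs_le.2 ⟨by linarith, by linarith⟩
    exact ⟨h₀₀, h₀₁, h₁₀, h₁₁⟩
  · rintro ⟨h₀₀, h₀₁, h₁₀, h₁₁⟩ X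
    have := add_mul_le_nuc2 h₁₁ X
    rw [h₀₀, h₀₁, h₁₀]
    linarith

theorem nuc2SubdiffE11_sub_range_eq :
    nuc2SubdiffE11 - Set.range (fun β : ℝ => β • E11)
      = {G | G 0 1 = 0 ∧ G 1 0 = 0 ∧ |G 1 1| ≤ 1} := by
  ext G
  simp only [Set.mem_sub, Set.exists_range_iff, mem_nuc2SubdiffE11_iff, Set.mem_ofPred_eq]
  constructor
  · rintro ⟨H, ⟨-, h₀₁, h₁₀, h₁₁⟩, β, rfl⟩
    simp [E11_eq, h₀₁, h₁₀, h₁₁]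
  · rintro ⟨h₀₁, h₁₀, h₁₁⟩
    refine ⟨!![1, 0; 0, G 1 1], by simpa using h₁₁, 1 - G 0 0, ?_⟩
    ext i j
    fin_cases i <;> fin_cases j <;> simp [E11_eq, h₀₁, h₁₀]

def diagSubmodule : Submodule ℝ (Matrix (Fin 2) (Fin 2) ℝ) where
  carrier := {G | G 0 1 = 0 ∧ G 1 0 = 0}
  add_mem' ha hb := ⟨by simp [ha.1, hb.1], by simp [ha.2, hb.2]⟩
  zero_mem' := ⟨rfl, rfl⟩
  smul_mem' c _ hx := ⟨by simp [hx.1], by simp [hx.2]⟩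

theorem nuc2SubdiffE11_sub_range_subset :
    nuc2SubdiffE11 - Set.range (fun β : ℝ => β • E11) ⊆ {G | G 0 1 = 0 ∧ G 1 0 = 0} := by
  rw [nuc2SubdiffE11_sub_range_eq]
  exact fun G hG => ⟨hG.1, hG.2.1⟩

theorem zero_mem_intrinsicInterior_nuc2SubdiffE11_sub_range :
    (0 : Matrix (Fin 2) (Fin 2) ℝ) ∈
      intrinsicInterior ℝ (nuc2SubdiffE11 - Set.range (fun β : ℝ => β • E11)) := by
  have hspan : affineSpan ℝ (nuc2SubdiffE11 - Set.range (fun β : ℝ => β • E11))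
      ≤ diagSubmodule.toAffineSubspace :=
    affineSpan_le.2 nuc2SubdiffE11_sub_range_subset
  refine mem_intrinsicInterior_of_isOpen_of_inter_affineSpan_subset
    (U := {G | |G 1 1| < 1}) ?_ (by simp) ?_ ?_
  · exact isOpen_lt (by fun_prop) continuous_const
  · simp [nuc2SubdiffE11_sub_range_eq]
  · rintro G ⟨hG, hGspan⟩
    obtain ⟨h₀₁, h₁₀⟩ := Submodule.mem_toAffineSubspace.1 (hspan hGspan)
    rw [nuc2SubdiffE11_sub_range_eq]
    exact ⟨h₀₁, h₁₀, le_of_lt hG⟩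

theorem not_exists_nuc2_sharp_around_E11 :
    ¬ ∃ μ > (0 : ℝ), ∃ r ≥ (0 : ℝ), ∀ X : Matrix (Fin 2) (Fin 2) ℝ,
        nuc2 X + r * |X 0 0 - 1| - nuc2 E11 ≥ μ * nuc2 (X - E11) := by
  rintro ⟨μ, hμ, r, -, h⟩
  have hX : nuc2 !![1, μ; 0, 0] = √(1 + μ ^ 2) := by
    rw [nuc2_eq_sqrt]
    norm_num
  have hdist : nuc2 (!![1, μ; 0, 0] - E11) = μ := by
    rw [nuc2_eq_sqrt, E11_eq]
    norm_num [Real.sqrt_sq hμ.le]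
  have hsharp := h !![1, μ; 0, 0]
  rw [hX, hdist, nuc2_E11] at hsharp
  have hlt : √(1 + μ ^ 2) < 1 + μ ^ 2 :=
    Real.sqrt_lt_self_iff.2 (lt_add_of_pos_right 1 (by positivity))
  norm_num at hsharp
  nlinarith

/-- For `min{‖X‖₁ : X_{1,1} = 1}` over `2 × 2` matrices (nuclear norm),
`E_{1,1}` is the unique minimizer, strict complementarity holds
(`0 ∈ relint(∂‖·‖₁(E11) − range A*)`, with the set contained in the diagonal matrices),
yet the problem is not `(μ,r)`-sharp around `E11` for any `μ > 0`, `r ≥ 0`. -/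
theorem nuclear_norm_strict_comp_not_sharp :
    (∀ X : Matrix (Fin 2) (Fin 2) ℝ, X 0 0 = 1 → nuc2 E11 ≤ nuc2 X) ∧
    (∀ X : Matrix (Fin 2) (Fin 2) ℝ, X 0 0 = 1 → nuc2 X = nuc2 E11 → X = E11) ∧
    ((0 : Matrix (Fin 2) (Fin 2) ℝ) ∈ intrinsicInterior ℝ
      ({G : Matrix (Fin 2) (Fin 2) ℝ |
          ∀ X : Matrix (Fin 2) (Fin 2) ℝ,
            nuc2 X ≥ nuc2 E11 + ∑ i, ∑ j, G i j * (X i j - E11 i j)}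
        - Set.range (fun β : ℝ => β • E11))) ∧
    (({G : Matrix (Fin 2) (Fin 2) ℝ |
          ∀ X : Matrix (Fin 2) (Fin 2) ℝ,
            nuc2 X ≥ nuc2 E11 + ∑ i, ∑ j, G i j * (X i j - E11 i j)}
        - Set.range (fun β : ℝ => β • E11))
      ⊆ {G : Matrix (Fin 2) (Fin 2) ℝ | G 0 1 = 0 ∧ G 1 0 = 0}) ∧
    ¬ ∃ μ > (0 : ℝ), ∃ r ≥ (0 : ℝ), ∀ X : Matrix (Fin 2) (Fin 2) ℝ,
        nuc2 X + r * |X 0 0 - 1| - nuc2 E11 ≥ μ * nuc2 (X - E11) := by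
  refine ⟨fun X hX => ?_, fun X hX h => eq_E11_of_nuc2_eq_one hX (h.trans nuc2_E11),
    zero_mem_intrinsicInterior_nuc2SubdiffE11_sub_range, nuc2SubdiffE11_sub_range_subset,
    not_exists_nuc2_sharp_around_E11⟩
  simpa [nuc2_E11, hX] using apply_zero_zero_le_nuc2 X
end

section
/- Sharpness of sparse recovery under RIP: Let A: ℝⁿ → W be linear, x♮ a k-sparse vector, b = Ax♮, k' > 0, ε > 0. Suppose rip⁺_{k'}(A) ≥ 1 and √(k'/k) · rip⁻_{k+k'}(A)/rip⁺_{k'}(A) ≥ 1 + ε, where for s-sparse vectors z, rip⁻_s(A)‖z‖₂ ≤ ‖Az‖ ≤ rip⁺_s(A)‖z‖₂. Then for all δ ∈ ℝⁿ: ‖x♮ + δ‖₁ + √(k')‖Aδ‖ − ‖x♮‖₁ ≥ (ε/(2+ε))‖δ‖₁. -/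
/-!
Let `S` be the support of `x0` and `T` the `k'` largest entries of `δ` off `S`. Peeling the rest
of `Sᶜ` into successive blocks of `k'` largest entries, each block has `ℓ₂`-norm at most the
`ℓ₁`-norm of the previous block divided by `√k'`, so the upper RIP bound and the triangle
inequality give `‖A δ_{Sᶜ \ T}‖ ≤ ρhi ‖δ_{Sᶜ}‖₁ / √k'`. The lower RIP bound on the
`(k + k')`-sparse vector `δ_{S ∪ T}` and Cauchy–Schwarz on `S` then yield the robust null space
property `(1 + ε) ‖δ_S‖₁ ≤ ‖δ_{Sᶜ}‖₁ + √k' ‖A δ‖`, and the reverse triangle inequality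
`‖x0 + δ‖₁ - ‖x0‖₁ ≥ ‖δ_{Sᶜ}‖₁ - ‖δ_S‖₁` turns it into the claim.
-/

open Finset

theorem exists_subset_card_eq_min_forall_le {ι α : Type*} [DecidableEq ι] [LinearOrder α]
    (f : ι → α) (m : ℕ) (U : Finset ι) :
    ∃ T ⊆ U, #T = min m #U ∧ ∀ i ∈ U \ T, ∀ j ∈ T, f i ≤ f j := by
  induction m generalizing U with
  | zero => exact ⟨∅, empty_subset _, by simp, by simp⟩
  | succ m ih =>
    rcases U.eq_empty_or_nonempty with rfl | hU
    · exact ⟨∅, empty_subset _, by simp, by simp⟩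
    obtain ⟨j₀, hj₀, hmax⟩ := U.exists_max_image f hU
    obtain ⟨T, hTU, hcard, hdom⟩ := ih (U.erase j₀)
    have hj₀T : j₀ ∉ T := fun h => by simpa using hTU h
    refine ⟨insert j₀ T, insert_subset hj₀ (hTU.trans (erase_subset _ _)), ?_, ?_⟩
    · rw [card_insert_of_notMem hj₀T, hcard, card_erase_of_mem hj₀]
      have := card_pos.mpr hU
      omega
    · intro i hi j hj
      rw [mem_sdiff, mem_insert, not_or] at hi
      rcases mem_insert.mp hj with rfl | hj
      · exact hmax i hi.1
      · exact hdom i (mem_sdiff.mpr ⟨mem_erase.mpr ⟨hi.2.1, hi.1⟩, hi.2.2⟩) j hj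

theorem sqrt_sum_sq_le_sum_abs_div_sqrt_card {ι : Type*} {T₂ T : Finset ι} (v : ι → ℝ)
    (hcard : #T₂ ≤ #T) (hdom : ∀ i ∈ T₂, ∀ j ∈ T, |v i| ≤ |v j|) :
    √(∑ i ∈ T₂, v i ^ 2) ≤ (∑ j ∈ T, |v j|) / √(#T) := by
  rcases T.eq_empty_or_nonempty with rfl | hT
  · simp [card_eq_zero.mp (Nat.le_zero.mp hcard)]
  have hc : (0 : ℝ) < #T := by exact_mod_cast hT.card_pos
  set a := (∑ j ∈ T, |v j|) / #T
  have habs : ∀ i ∈ T₂, |v i| ≤ a := fun i hi => by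
    rw [le_div_iff₀ hc, mul_comm, ← nsmul_eq_mul]
    exact card_nsmul_le_sum _ _ _ (hdom i hi)
  have hsq : ∑ i ∈ T₂, v i ^ 2 ≤ #T * a ^ 2 := calc
    ∑ i ∈ T₂, v i ^ 2 ≤ #T₂ • a ^ 2 := sum_le_card_nsmul _ _ _ fun i hi => by
      rw [← sq_abs]; exact pow_le_pow_left₀ (abs_nonneg _) (habs i hi) 2
    _ ≤ #T * a ^ 2 := by rw [nsmul_eq_mul]; gcongr
  calc √(∑ i ∈ T₂, v i ^ 2) ≤ √(#T * a ^ 2) := Real.sqrt_le_sqrt hsq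
    _ = √(#T) * a := by rw [Real.sqrt_mul hc.le, Real.sqrt_sq (by positivity)]
    _ = (∑ j ∈ T, |v j|) / √(#T) := by
      rw [mul_div_assoc', mul_comm, mul_div_assoc, Real.sqrt_div_self', mul_one_div]

section

variable {ι : Type*} [Fintype ι]

theorem card_filter_indicator_ne_zero_le (T : Finset ι) (v : ι → ℝ) :
    #{i | (T : Set ι).indicator v i ≠ 0} ≤ #T :=
  card_le_card fun i hi => by
    by_contra h
    simp [Set.indicator_of_notMem (mem_coe.not.mpr h)] at hi

theorem sum_indicator_sq (T : Finset ι) (v : ι → ℝ) :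
    ∑ i, (T : Set ι).indicator v i ^ 2 = ∑ i ∈ T, v i ^ 2 := by
  classical
  simp [Set.indicator_apply, ite_pow]

theorem sum_abs_compl_sub_sum_abs_le [DecidableEq ι] {x : ι → ℝ} {S : Finset ι}
    (hx : ∀ i ∉ S, x i = 0) (δ : ι → ℝ) :
    ∑ i ∈ Sᶜ, |δ i| - ∑ i ∈ S, |δ i| ≤ ∑ i, |x i + δ i| - ∑ i, |x i| := by
  have hS : -∑ i ∈ S, |δ i| ≤ ∑ i ∈ S, (|x i + δ i| - |x i|) := by
    rw [← sum_neg_distrib]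
    refine sum_le_sum fun i _ => ?_
    have h := abs_sub_abs_le_abs_sub (x i) (x i + δ i)
    rw [sub_add_cancel_left, abs_neg] at h
    linarith
  have hSc : ∑ i ∈ Sᶜ, (|x i + δ i| - |x i|) = ∑ i ∈ Sᶜ, |δ i| :=
    sum_congr rfl fun i hi => by simp [hx i (mem_compl.mp hi)]
  rw [← sum_sub_distrib, ← sum_add_sum_compl S, hSc]
  linarith

variable {W : Type*} [SeminormedAddCommGroup W] [Module ℝ W] (A : (ι → ℝ) →ₗ[ℝ] W)

theorem norm_apply_indicator_le {s : ℕ} {ρ : ℝ}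
    (hup : ∀ z : ι → ℝ, #{i | z i ≠ 0} ≤ s → ‖A z‖ ≤ ρ * √(∑ i, z i ^ 2))
    {T : Finset ι} (hT : #T ≤ s) (v : ι → ℝ) :
    ‖A ((T : Set ι).indicator v)‖ ≤ ρ * √(∑ i ∈ T, v i ^ 2) := by
  simpa only [sum_indicator_sq] using
    hup _ ((card_filter_indicator_ne_zero_le T v).trans hT)

theorem mul_sqrt_sum_sq_le_norm_apply_indicator {s : ℕ} {ρ : ℝ}
    (hlo : ∀ z : ι → ℝ, #{i | z i ≠ 0} ≤ s → ρ * √(∑ i, z i ^ 2) ≤ ‖A z‖)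
    {T : Finset ι} (hT : #T ≤ s) (v : ι → ℝ) :
    ρ * √(∑ i ∈ T, v i ^ 2) ≤ ‖A ((T : Set ι).indicator v)‖ := by
  simpa only [sum_indicator_sq] using
    hlo _ ((card_filter_indicator_ne_zero_le T v).trans hT)

variable [DecidableEq ι]

theorem norm_apply_indicator_sdiff_le {s : ℕ} {ρ : ℝ} (hs : 0 < s) (hρ : 0 ≤ ρ)
    (hup : ∀ z : ι → ℝ, #{i | z i ≠ 0} ≤ s → ‖A z‖ ≤ ρ * √(∑ i, z i ^ 2)) (v : ι → ℝ)
    {U T : Finset ι} (hTU : T ⊆ U) (hcard : #T = min s #U)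
    (hdom : ∀ i ∈ U \ T, ∀ j ∈ T, |v i| ≤ |v j|) :
    ‖A ((↑(U \ T) : Set ι).indicator v)‖ ≤ ρ * (∑ i ∈ U, |v i|) / √s := by
  induction hN : #U using Nat.strong_induction_on generalizing U T with
  | _ N ih =>
  by_cases hsmall : #U ≤ s
  · obtain rfl : T = U := eq_of_subset_of_card_le hTU (by omega)
    rw [Finset.sdiff_self, coe_empty, Set.indicator_empty', map_zero, norm_zero]
    positivity
  have hTs : #T = s := by omega
  obtain ⟨T₂, hT₂, hcard₂, hdom₂⟩ := exists_subset_card_eq_min_forall_le (|v ·|) s (U \ T)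
  have hsplit : (↑(U \ T) : Set ι).indicator v
      = (T₂ : Set ι).indicator v + (↑((U \ T) \ T₂) : Set ι).indicator v := by
    rw [coe_sdiff (U \ T), Set.indicator_sdiff (coe_subset.mpr hT₂), add_sub_cancel]
  have hhead : ‖A ((T₂ : Set ι).indicator v)‖ ≤ ρ * (∑ j ∈ T, |v j|) / √s := by
    refine (norm_apply_indicator_le A hup (by omega) v).trans ?_
    rw [mul_div_assoc, ← hTs]
    gcongr
    exact sqrt_sum_sq_le_sum_abs_div_sqrt_card v (by omega) fun i hi => hdom i (hT₂ hi)
  have htail := ih #(U \ T) (by rw [card_sdiff_of_subset hTU]; omega) hT₂ hcard₂ hdom₂ rfl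
  calc ‖A ((↑(U \ T) : Set ι).indicator v)‖
      ≤ ‖A ((T₂ : Set ι).indicator v)‖ + ‖A ((↑((U \ T) \ T₂) : Set ι).indicator v)‖ := by
        rw [hsplit, map_add]; exact norm_add_le _ _
    _ ≤ ρ * (∑ j ∈ T, |v j|) / √s + ρ * (∑ i ∈ U \ T, |v i|) / √s := add_le_add hhead htail
    _ = ρ * (∑ i ∈ U, |v i|) / √s := by rw [← sum_sdiff hTU]; ring

theorem mul_sum_abs_le_of_rip {k s : ℕ} {ρlo ρhi : ℝ} (hs : 0 < s) (hρlo : 0 ≤ ρlo)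
    (hρhi : 0 ≤ ρhi)
    (hup : ∀ z : ι → ℝ, #{i | z i ≠ 0} ≤ s → ‖A z‖ ≤ ρhi * √(∑ i, z i ^ 2))
    (hlo : ∀ z : ι → ℝ, #{i | z i ≠ 0} ≤ k + s → ρlo * √(∑ i, z i ^ 2) ≤ ‖A z‖)
    {S : Finset ι} (hS : #S ≤ k) (δ : ι → ℝ) :
    ρlo * ∑ i ∈ S, |δ i| ≤ √k * (‖A δ‖ + ρhi * (∑ i ∈ Sᶜ, |δ i|) / √s) := by
  obtain ⟨T, hTS, hcard, hdom⟩ := exists_subset_card_eq_min_forall_le (|δ ·|) s Sᶜ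
  have hsplit : (↑(S ∪ T) : Set ι).indicator δ = δ - (↑(Sᶜ \ T) : Set ι).indicator δ := by
    rw [eq_sub_iff_add_eq, show (↑(Sᶜ \ T) : Set ι) = (↑(S ∪ T))ᶜ by ext; simp,
      Set.indicator_self_add_compl]
  have hCS : ∑ i ∈ S, |δ i| ≤ √k * √(∑ i ∈ S ∪ T, δ i ^ 2) := calc
    ∑ i ∈ S, |δ i| = ∑ i ∈ S, 1 * |δ i| := by simp only [one_mul]
    _ ≤ √(∑ i ∈ S, 1 ^ 2) * √(∑ i ∈ S, |δ i| ^ 2) := Real.sum_mul_le_sqrt_mul_sqrt _ _ _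
    _ ≤ √k * √(∑ i ∈ S ∪ T, δ i ^ 2) := by
      simp only [one_pow, sum_const, nsmul_eq_mul, mul_one, sq_abs]
      gcongr
      exact subset_union_left
  have hlower := mul_sqrt_sum_sq_le_norm_apply_indicator A hlo
    ((card_union_le S T).trans (by omega)) δ
  have htail := norm_apply_indicator_sdiff_le A hs hρhi hup δ hTS hcard hdom
  have htri : ‖A ((↑(S ∪ T) : Set ι).indicator δ)‖
      ≤ ‖A δ‖ + ‖A ((↑(Sᶜ \ T) : Set ι).indicator δ)‖ := by
    rw [hsplit, map_sub]; exact norm_sub_le _ _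
  calc ρlo * ∑ i ∈ S, |δ i| ≤ ρlo * (√k * √(∑ i ∈ S ∪ T, δ i ^ 2)) := by gcongr
    _ = √k * (ρlo * √(∑ i ∈ S ∪ T, δ i ^ 2)) := by ring
    _ ≤ √k * (‖A δ‖ + ρhi * (∑ i ∈ Sᶜ, |δ i|) / √s) := by gcongr; linarith

/-- The `ℓ₁`-robust null space property of order `k` of Foucart–Rauhut, with their constants
`ρ = 1 / c` and `τ / c`. -/
def RobustNullSpaceProperty (k : ℕ) (c τ : ℝ) : Prop :=
  ∀ S : Finset ι, #S ≤ k → ∀ δ : ι → ℝ, c * ∑ i ∈ S, |δ i| ≤ ∑ i ∈ Sᶜ, |δ i| + τ * ‖A δ‖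

theorem robustNullSpaceProperty_of_rip {k s : ℕ} {c ρlo ρhi : ℝ} (hk : 0 < k) (hs : 0 < s)
    (hc : 0 ≤ c) (hρhi : 1 ≤ ρhi)
    (hup : ∀ z : ι → ℝ, #{i | z i ≠ 0} ≤ s → ‖A z‖ ≤ ρhi * √(∑ i, z i ^ 2))
    (hlo : ∀ z : ι → ℝ, #{i | z i ≠ 0} ≤ k + s → ρlo * √(∑ i, z i ^ 2) ≤ ‖A z‖)
    (hcoef : c * √k * ρhi ≤ √s * ρlo) :
    RobustNullSpaceProperty A k c √s := by
  intro S hS δ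
  have hsqk : 0 < √(k : ℝ) := Real.sqrt_pos.mpr (by exact_mod_cast hk)
  have hsqs : 0 < √(s : ℝ) := Real.sqrt_pos.mpr (by exact_mod_cast hs)
  have hρlo : 0 ≤ ρlo := (mul_nonneg_iff_of_pos_left hsqs).mp <| hcoef.trans' <| by positivity
  have hcone := mul_sum_abs_le_of_rip A hs hρlo (by linarith) hup hlo hS δ
  set a := ∑ i ∈ S, |δ i|
  set b := ∑ i ∈ Sᶜ, |δ i|
  have ha : 0 ≤ a := by positivity
  have hB : 0 ≤ ‖A δ‖ := norm_nonneg _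
  have hscaled : √k * (ρhi * (c * a)) ≤ √k * (ρhi * (b + √s * ‖A δ‖)) := calc
    √k * (ρhi * (c * a)) = c * √k * ρhi * a := by ring
    _ ≤ √s * ρlo * a := by gcongr
    _ = √s * (ρlo * a) := by ring
    _ ≤ √s * (√k * (‖A δ‖ + ρhi * b / √s)) := by gcongr
    _ = √k * (√s * ‖A δ‖ + ρhi * b) := by field_simp
    _ ≤ √k * (ρhi * (b + √s * ‖A δ‖)) := by
      gcongr
      nlinarith [mul_nonneg hsqs.le hB]
  exact le_of_mul_le_mul_left (le_of_mul_le_mul_left hscaled hsqk) (by linarith)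

theorem sum_abs_add_le_of_robustNullSpaceProperty {k : ℕ} {ε τ : ℝ} (hε : 0 < ε) (hτ : 0 ≤ τ)
    (hA : RobustNullSpaceProperty A k (1 + ε) τ) {x : ι → ℝ} (hx : #{i | x i ≠ 0} ≤ k)
    (δ : ι → ℝ) :
    ε / (2 + ε) * ∑ i, |δ i| ≤ ∑ i, |x i + δ i| + τ * ‖A δ‖ - ∑ i, |x i| := by
  set S : Finset ι := {i | x i ≠ 0}
  have hnsp := hA S hx δ
  have htri := sum_abs_compl_sub_sum_abs_le (S := S) (fun i hi => by simpa [S] using hi) δ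
  have hM : 0 ≤ τ * ‖A δ‖ := by positivity
  rw [← sum_add_sum_compl S, div_mul_eq_mul_div, div_le_iff₀ (by linarith)]
  nlinarith [mul_le_mul_of_nonneg_left htri (by linarith : (0 : ℝ) ≤ 2 + ε), mul_nonneg hε.le hM]

end

/-- Sharpness of sparse recovery under RIP. If `rip⁺_{k'}(A) ≥ 1` and
`√(k'/k) · rip⁻_{k+k'}(A) / rip⁺_{k'}(A) ≥ 1 + ε`, then for every `δ`,
`‖x0 + δ‖₁ + √k' ‖A δ‖ − ‖x0‖₁ ≥ (ε/(2+ε)) ‖δ‖₁`. -/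
theorem sparse_recovery_sharp_of_rip
    {n : ℕ} {W : Type*} [NormedAddCommGroup W] [NormedSpace ℝ W]
    (A : (Fin n → ℝ) →ₗ[ℝ] W)
    (x0 : Fin n → ℝ) (k k' : ℕ) (hk' : 0 < k')
    (hx0 : (Finset.univ.filter fun i => x0 i ≠ 0).card ≤ k)
    (ε ρlo ρhi : ℝ) (hε : 0 < ε) (hρhi : 1 ≤ ρhi)
    (hup : ∀ z : Fin n → ℝ, (Finset.univ.filter fun i => z i ≠ 0).card ≤ k' →
      ‖A z‖ ≤ ρhi * Real.sqrt (∑ i, (z i) ^ 2))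
    (hlo : ∀ z : Fin n → ℝ, (Finset.univ.filter fun i => z i ≠ 0).card ≤ k + k' →
      ρlo * Real.sqrt (∑ i, (z i) ^ 2) ≤ ‖A z‖)
    (hratio : Real.sqrt ((k' : ℝ) / k) * (ρlo / ρhi) ≥ 1 + ε) :
    ∀ δ : Fin n → ℝ,
      (∑ i, |x0 i + δ i|) + Real.sqrt (k' : ℝ) * ‖A δ‖ - (∑ i, |x0 i|)
        ≥ ε / (2 + ε) * ∑ i, |δ i| := by
  have hk : 0 < k := Nat.pos_of_ne_zero fun hk => by
    simp only [hk, CharP.cast_eq_zero, div_zero, Real.sqrt_zero, zero_mul] at hratio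
    linarith
  have hcoef : (1 + ε) * √k * ρhi ≤ √k' * ρlo := by
    rw [Real.sqrt_div' _ (Nat.cast_nonneg k), div_mul_div_comm, ge_iff_le,
      le_div_iff₀ (by positivity)] at hratio
    linarith
  exact sum_abs_add_le_of_robustNullSpaceProperty A hε (Real.sqrt_nonneg _)
    (robustNullSpaceProperty_of_rip A hk hk' (by linarith) hρhi hup hlo hcoef) hx0
end

section
/- Mirror descent guarantee: Let h: V → ℝ be differentiable and σ-strongly convex w.r.t. the norm of V, and f: V → ℝ convex and L-Lipschitz w.r.t. that norm. Then mirror descent with step size η, run for t iterations from x̄, produces a point x̃ with f(x̃) − f(x*) ≤ L²η/(2σ) + D_h(x*‖x̄)/(ηt), for any minimizer x* of f, where D_h is the Bregman divergence of h. -/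
/-- Mirror descent guarantee. If `h` is differentiable and `σ`-strongly
convex, `f` is convex and `L`-Lipschitz, and `(x t)` are mirror descent iterates from
`xbar` with step size `η` (i.e. `∇h(x_{t+1}) = ∇h(x_t) − η g_t` with `g_t ∈ ∂f(x_t)`),
then some iterate among the first `T` satisfies
`f(x_t) − f(x*) ≤ L²η/(2σ) + D_h(x*‖xbar)/(ηT)`. -/
theorem mirror_descent_guarantee
    {V : Type*} [NormedAddCommGroup V] [NormedSpace ℝ V] [FiniteDimensional ℝ V]
    (h : V → ℝ) (hdiff : Differentiable ℝ h)
    (σ : ℝ) (hσ : 0 < σ)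
    (hsc : ∀ x y : V, h x ≥ h y + fderiv ℝ h y (x - y) + σ / 2 * ‖x - y‖ ^ 2)
    (f : V → ℝ) (hf : ConvexOn ℝ Set.univ f)
    (L : ℝ) (hL : 0 ≤ L) (hLip : ∀ x y : V, |f x - f y| ≤ L * ‖x - y‖)
    (η : ℝ) (hη : 0 < η) (T : ℕ) (hT : 0 < T)
    (xbar : V) (x : ℕ → V) (g : ℕ → V →L[ℝ] ℝ)
    (hx0 : x 0 = xbar)
    (hsub : ∀ t : ℕ, ∀ y : V, f y ≥ f (x t) + g t (y - x t))
    (hrec : ∀ t : ℕ, fderiv ℝ h (x (t + 1)) = fderiv ℝ h (x t) - η • g t)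
    (xstar : V) (hstar : ∀ y : V, f xstar ≤ f y) :
    ∃ t ≤ T, f (x t) - f xstar ≤
      L ^ 2 * η / (2 * σ) +
        (h xstar - h xbar - fderiv ℝ h xbar (xstar - xbar)) / (η * T) := by
  set F : ℕ → ℝ := fun t => h xstar - h (x t) - fderiv ℝ h (x t) (xstar - x t) with hF
  clear_value F
  -- per-step inequality
  have key : ∀ t : ℕ, η * (f (x t) - f xstar) ≤
      η ^ 2 * L ^ 2 / (2 * σ) + (F t - F (t + 1)) := by
    intro t
    have s1 := hsub t xstar
    have hsc1 := hsc (x (t + 1)) (x t)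
    have e1 : g t (xstar - x t) = g t (xstar - x (t + 1)) - g t (x t - x (t + 1)) := by
      rw [← map_sub]; congr 1; abel
    have e2 : fderiv ℝ h (x (t + 1)) (xstar - x (t + 1)) =
        fderiv ℝ h (x t) (xstar - x (t + 1)) - η * g t (xstar - x (t + 1)) := by
      rw [hrec t]; simp
    have e3 : fderiv ℝ h (x t) (xstar - x t) =
        fderiv ℝ h (x t) (xstar - x (t + 1)) + fderiv ℝ h (x t) (x (t + 1) - x t) := by
      rw [← map_add]; congr 1; abel
    have hgL : g t (x t - x (t + 1)) ≤ L * ‖x (t + 1) - x t‖ := by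
      have h1 := hsub t (x t + (x t - x (t + 1)))
      have h2 := hLip (x t + (x t - x (t + 1))) (x t)
      simp only [add_sub_cancel_left] at h1 h2
      rw [norm_sub_rev] at h2
      have h3 := (abs_le.mp h2).2
      linarith
    have hmul : η * g t (x t - x (t + 1)) ≤ η * (L * ‖x (t + 1) - x t‖) :=
      mul_le_mul_of_nonneg_left hgL hη.le
    have hamgm : η * (L * ‖x (t + 1) - x t‖) ≤
        η ^ 2 * L ^ 2 / (2 * σ) + σ / 2 * ‖x (t + 1) - x t‖ ^ 2 := by
      set r := ‖x (t + 1) - x t‖ with hr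
      have hrpos : 0 ≤ r := norm_nonneg _
      have h2σ : (0 : ℝ) < 2 * σ := by linarith
      have hmul2 : 2 * σ * (η * (L * r)) ≤
          2 * σ * (η ^ 2 * L ^ 2 / (2 * σ) + σ / 2 * r ^ 2) := by
        have heq : 2 * σ * (η ^ 2 * L ^ 2 / (2 * σ) + σ / 2 * r ^ 2) =
            η ^ 2 * L ^ 2 + σ ^ 2 * r ^ 2 := by
          field_simp
        rw [heq]
        nlinarith [sq_nonneg (η * L - σ * r)]
      exact le_of_mul_le_mul_left hmul2 h2σ
    have h0 : f (x t) - f xstar ≤ g t (x t - x (t + 1)) - g t (xstar - x (t + 1)) := by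
      linarith
    have s1' := mul_le_mul_of_nonneg_left h0 hη.le
    rw [mul_sub] at s1'
    simp only [hF]
    linarith
  -- telescoping sum
  have hsum : ∑ t ∈ Finset.range T, (η * (f (x t) - f xstar)) ≤
      (T : ℝ) * (η ^ 2 * L ^ 2 / (2 * σ)) +
        (h xstar - h xbar - fderiv ℝ h xbar (xstar - xbar)) := by
    have step1 : ∑ t ∈ Finset.range T, (η * (f (x t) - f xstar)) ≤
        ∑ t ∈ Finset.range T, (η ^ 2 * L ^ 2 / (2 * σ) + (F t - F (t + 1))) :=
      Finset.sum_le_sum fun t _ => key t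
    have step2 : ∑ t ∈ Finset.range T, (η ^ 2 * L ^ 2 / (2 * σ) + (F t - F (t + 1))) =
        (T : ℝ) * (η ^ 2 * L ^ 2 / (2 * σ)) + (F 0 - F T) := by
      rw [Finset.sum_add_distrib, Finset.sum_const, Finset.sum_range_sub' F T]
      simp [nsmul_eq_mul]
    have hFT : 0 ≤ F T := by
      have := hsc xstar (x T)
      have hnn : 0 ≤ σ / 2 * ‖xstar - x T‖ ^ 2 := by positivity
      simp only [hF]
      linarith
    have hF0 : F 0 = h xstar - h xbar - fderiv ℝ h xbar (xstar - xbar) := by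
      simp only [hF, hx0]
    rw [step2, hF0] at step1
    linarith
  -- pick the best iterate
  obtain ⟨t₀, ht₀mem, ht₀min⟩ := Finset.exists_min_image (Finset.range T)
    (fun t => f (x t)) ⟨0, Finset.mem_range.mpr hT⟩
  refine ⟨t₀, (Finset.mem_range.mp ht₀mem).le, ?_⟩
  have hlow : (T : ℝ) * (η * (f (x t₀) - f xstar)) ≤
      ∑ t ∈ Finset.range T, (η * (f (x t) - f xstar)) := by
    have := Finset.card_nsmul_le_sum (Finset.range T)
      (fun t => η * (f (x t) - f xstar)) (η * (f (x t₀) - f xstar))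
      (fun t ht => mul_le_mul_of_nonneg_left (by linarith [ht₀min t ht]) hη.le)
    simpa [Finset.card_range, nsmul_eq_mul] using this
  have hTpos : (0 : ℝ) < (T : ℝ) := Nat.cast_pos.mpr hT
  have hTη : (0 : ℝ) < η * T := mul_pos hη hTpos
  have hσne : (2 * σ) ≠ 0 := by positivity
  have hrhs : (L ^ 2 * η / (2 * σ) +
      (h xstar - h xbar - fderiv ℝ h xbar (xstar - xbar)) / (η * T)) * (η * T) =
      (T : ℝ) * (η ^ 2 * L ^ 2 / (2 * σ)) +
        (h xstar - h xbar - fderiv ℝ h xbar (xstar - xbar)) := by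
    field_simp
  have hmain : (f (x t₀) - f xstar) * (η * T) ≤
      (L ^ 2 * η / (2 * σ) +
        (h xstar - h xbar - fderiv ℝ h xbar (xstar - xbar)) / (η * T)) * (η * T) := by
    rw [hrhs]
    have : (f (x t₀) - f xstar) * (η * T) = (T : ℝ) * (η * (f (x t₀) - f xstar)) := by ring
    rw [this]
    linarith
  exact le_of_mul_le_mul_right hmain hTη
end

section
/- Relative error bound via sharpness: Suppose F_{r}(x) = ‖x‖ + r‖A(x) − b‖ is μ-sharp around x♮ (with A(x♮) = b) and L-Lipschitz, with L ≥ 1. Then r‖b‖ ≤ (L+1)‖x♮‖, and consequently any minimizer x̃ of the noisy penalized problem (with b replaced by b + δ) satisfies ‖x̃ − x♮‖/‖x♮‖ ≤ ((2L+2)/μ)·‖δ‖/‖b‖. -/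
/-- Relative error bound via sharpness. If `F_r(x) = ‖x‖ + r‖A x − b‖`
is `μ`-sharp around `x0` (with `A x0 = b`) and `L`-Lipschitz with `L ≥ 1`, then
`r‖b‖ ≤ (L+1)‖x0‖`, and any minimizer `xt` of the noisy penalized problem (with `b`
replaced by `b + δ`) satisfies `‖xt − x0‖/‖x0‖ ≤ ((2L+2)/μ)·‖δ‖/‖b‖`. -/
theorem relative_error_bound_of_sharpness
    {V W : Type*} [NormedAddCommGroup V] [NormedSpace ℝ V] [FiniteDimensional ℝ V]
    [NormedAddCommGroup W] [NormedSpace ℝ W] [FiniteDimensional ℝ W]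
    (A : V →L[ℝ] W) (x0 : V) (b : W) (hb : b = A x0)
    (μ r L : ℝ) (hμ : 0 < μ) (hr : 0 ≤ r) (hL : 1 ≤ L)
    (hsharp : ∀ x : V, (‖x‖ + r * ‖A x - b‖) - ‖x0‖ ≥ μ * ‖x - x0‖)
    (hLip : ∀ x y : V, |(‖x‖ + r * ‖A x - b‖) - (‖y‖ + r * ‖A y - b‖)| ≤ L * ‖x - y‖) :
    r * ‖b‖ ≤ (L + 1) * ‖x0‖ ∧
    (∀ (δ : W) (xt : V),
      (∀ x : V, ‖xt‖ + r * ‖A xt - (b + δ)‖ ≤ ‖x‖ + r * ‖A x - (b + δ)‖) →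
      ‖xt - x0‖ / ‖x0‖ ≤ (2 * L + 2) / μ * (‖δ‖ / ‖b‖)) := by
  have hAx0 : A x0 - b = 0 := by rw [hb, sub_self]
  have h1 : r * ‖b‖ ≤ (L + 1) * ‖x0‖ := by
    have h := hLip 0 x0
    rw [hAx0] at h
    simp only [map_zero, zero_sub, norm_neg, norm_zero, zero_add, mul_zero, add_zero] at h
    have := abs_le.mp h
    linarith [this.2]
  refine ⟨h1, fun δ xt hmin => ?_⟩
  have hmin0 := hmin x0
  rw [show A x0 - (b + δ) = -δ by rw [hb]; abel] at hmin0
  rw [norm_neg] at hmin0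
  have htri : ‖A xt - b‖ ≤ ‖A xt - (b + δ)‖ + ‖δ‖ := by
    have h : A xt - b = (A xt - (b + δ)) + δ := by abel
    rw [h]; exact norm_add_le _ _
  have hkey : μ * ‖xt - x0‖ ≤ 2 * r * ‖δ‖ := by
    nlinarith [hsharp xt, mul_le_mul_of_nonneg_left htri hr]
  by_cases hb0 : b = 0
  · have hx0 : x0 = 0 := by
      have h := hsharp 0
      simp only [norm_zero, hb0, sub_zero, map_zero, zero_add, zero_sub, norm_neg,
        mul_zero, add_zero] at h
      have h0 : ‖x0‖ = 0 := by nlinarith [norm_nonneg x0]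
      exact norm_eq_zero.mp h0
    simp [hx0, hb0]
  · have hbpos : 0 < ‖b‖ := norm_pos_iff.mpr hb0
    have hx0pos : 0 < ‖x0‖ := by
      rcases (norm_nonneg x0).lt_or_eq with h | h
      · exact h
      · exfalso
        have hx : x0 = 0 := norm_eq_zero.mp h.symm
        rw [hx, map_zero] at hb
        exact hb0 hb
    have hd : 0 ≤ ‖δ‖ := norm_nonneg δ
    rw [div_le_iff₀ hx0pos]
    have hnum : 2 * r * ‖δ‖ ≤ (2 * L + 2) * (‖δ‖ / ‖b‖) * ‖x0‖ := by
      have heq : (2 * L + 2) * (‖δ‖ / ‖b‖) * ‖x0‖ = (2 * L + 2) * ‖δ‖ * ‖x0‖ / ‖b‖ := by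
        ring
      rw [heq, le_div_iff₀ hbpos]
      nlinarith [mul_le_mul_of_nonneg_right h1 hd]
    have h2 : ‖xt - x0‖ ≤ 2 * r * ‖δ‖ / μ := by
      rw [le_div_iff₀ hμ]; nlinarith [hkey]
    calc ‖xt - x0‖ ≤ 2 * r * ‖δ‖ / μ := h2
      _ ≤ (2 * L + 2) * (‖δ‖ / ‖b‖) * ‖x0‖ / μ := by gcongr
      _ = (2 * L + 2) / μ * (‖δ‖ / ‖b‖) * ‖x0‖ := by ring
end
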